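/- arXiv:2006.14183 — 3 statements merged into one kernel-verified Lean document; each statement's English description precedes it below -/
import Mathlib

section
/- Let (G,Λ) be a pseudo free self-similar k-graph such that g·v = v for all g ∈ G and v ∈ Λ^0, let T be a maximal tail of Λ such that every cycline triple of (G, ΛT) is a cycline pair of (G, ΛT), let x be a cofinal infinite path of ΛT, and let f̃ : ℤ^k → 𝕋 be a group homomorphism. Then the family of operators {S_μ : μ ∈ ΛT} ∪ {U_g : g ∈ G} on ℓ²([x]) acts irreducibly: every bounded operator on ℓ²([x]) commuting with all S_μ and all U_g is a scalar multiple of the identity. -/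
/-- A `k`-graph: a countable small category equipped with a degree functor
`d : Λ → ℕ^k` satisfying the unique factorization property.  Objects are
identified with their identity morphisms (the degree-zero paths);
`comp μ ν` is the composite `μν` (a junk value when `s μ ≠ r ν`). -/
structure KGraph (k : ℕ) where
  Path : Type
  countable : Countable Path
  r : Path → Path
  s : Path → Path
  d : Path → Fin k → ℕ
  comp : Path → Path → Path
  d_r : ∀ μ, d (r μ) = 0
  d_s : ∀ μ, d (s μ) = 0
  r_r : ∀ μ, r (r μ) = r μ
  s_r : ∀ μ, s (r μ) = r μ
  r_s : ∀ μ, r (s μ) = s μ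
  s_s : ∀ μ, s (s μ) = s μ
  eq_r_of_d_eq_zero : ∀ μ, d μ = 0 → μ = r μ
  comp_id : ∀ μ, comp μ (s μ) = μ
  id_comp : ∀ μ, comp (r μ) μ = μ
  r_comp : ∀ μ ν, s μ = r ν → r (comp μ ν) = r μ
  s_comp : ∀ μ ν, s μ = r ν → s (comp μ ν) = s ν
  d_comp : ∀ μ ν, s μ = r ν → d (comp μ ν) = d μ + d ν
  comp_assoc : ∀ μ ν ξ, s μ = r ν → s ν = r ξ →
    comp (comp μ ν) ξ = comp μ (comp ν ξ)
  factor : ∀ μ p q, d μ = p + q →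
    ∃! αβ : Path × Path, s αβ.1 = r αβ.2 ∧ d αβ.1 = p ∧ d αβ.2 = q ∧
      comp αβ.1 αβ.2 = μ

namespace KGraph

variable {k : ℕ} (Λ : KGraph k)

/-- The vertices of a `k`-graph are the degree-zero paths. -/
def IsVertex (v : Λ.Path) : Prop := Λ.d v = 0

/-- `Λ` is row-finite if `|v Λ^p| < ∞` for every vertex `v` and `p ∈ ℕ^k`. -/
def RowFinite : Prop :=
  ∀ v, Λ.IsVertex v → ∀ p : Fin k → ℕ, {μ | Λ.r μ = v ∧ Λ.d μ = p}.Finite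

/-- `Λ` is source-free if `v Λ^p ≠ ∅` for every vertex `v` and `p ∈ ℕ^k`. -/
def SourceFree : Prop :=
  ∀ v, Λ.IsVertex v → ∀ p : Fin k → ℕ, ∃ μ, Λ.r μ = v ∧ Λ.d μ = p

/-- `ΛT`, the set of paths of `Λ` whose source lies in `T`. -/
def tailPaths (T : Set Λ.Path) : Set Λ.Path := {μ | Λ.s μ ∈ T}

/-- `H Λ T`, the set of paths with source in `T` and range in `H`. -/
def cornerPaths (T H : Set Λ.Path) : Set Λ.Path := {μ | Λ.s μ ∈ T ∧ Λ.r μ ∈ H}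

end KGraph

/-- A maximal tail of a `k`-graph. -/
structure MaximalTail {k : ℕ} (Λ : KGraph k) (T : Set Λ.Path) : Prop where
  nonempty : T.Nonempty
  vertex : ∀ v ∈ T, Λ.IsVertex v
  backward_closed : ∀ w, Λ.IsVertex w → ∀ v ∈ T, (∃ μ, Λ.r μ = w ∧ Λ.s μ = v) → w ∈ T
  reaches : ∀ v ∈ T, ∀ p : Fin k → ℕ, ∃ μ, Λ.r μ = v ∧ Λ.d μ = p ∧ Λ.s μ ∈ T
  directed : ∀ v₁ ∈ T, ∀ v₂ ∈ T, ∃ w ∈ T,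
    (∃ μ, Λ.r μ = v₁ ∧ Λ.s μ = w) ∧ (∃ ν, Λ.r ν = v₂ ∧ Λ.s ν = w)

/-- An infinite path of a `k`-graph, i.e. a degree-preserving functor
`x : Ω_k → Λ`; here `val p n` records the segment `x(p, p + n)`. -/
structure InfPath {k : ℕ} (Λ : KGraph k) where
  val : (Fin k → ℕ) → (Fin k → ℕ) → Λ.Path
  d_val : ∀ p n, Λ.d (val p n) = n
  r_val : ∀ p n, Λ.r (val p n) = val p 0
  s_val : ∀ p n, Λ.s (val p n) = val (p + n) 0
  comp_val : ∀ p m n, Λ.comp (val p m) (val (p + m) n) = val p (m + n)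

namespace InfPath

variable {k : ℕ} {Λ : KGraph k}

/-- The shift `σ^n x` of an infinite path. -/
def shift (x : InfPath Λ) (n : Fin k → ℕ) : InfPath Λ where
  val p m := x.val (p + n) m
  d_val p m := x.d_val _ _
  r_val p m := x.r_val _ _
  s_val p m := by rw [x.s_val, add_right_comm]
  comp_val p m m' := by
    show Λ.comp (x.val (p + n) m) (x.val (p + m + n) m') = x.val (p + n) (m + m')
    rw [add_right_comm p m n]; exact x.comp_val (p + n) m m'

/-- An infinite path lies in the subgraph determined by the set of paths `P`
if all of its segments lie in `P`. -/
def inSub (P : Set Λ.Path) (x : InfPath Λ) : Prop := ∀ p n, x.val p n ∈ P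

end InfPath

/-- `z = μ x`: `z` is the infinite path obtained by prepending the finite
path `μ` to the infinite path `x` (which requires `s μ = x(0,0)`). -/
def KGraph.IsExtension {k : ℕ} (Λ : KGraph k) (μ : Λ.Path) (x z : InfPath Λ) : Prop :=
  Λ.s μ = x.val 0 0 ∧ ∀ n, z.val 0 (Λ.d μ + n) = Λ.comp μ (x.val 0 n)

/-- A cycline pair `(μ, 1, ν)` of the subgraph of `Λ` determined by the set of
paths `P`: `s μ = s ν` and `μ x = ν x` for every infinite path `x` of the
subgraph with range `s ν`. -/
def KGraph.IsCyclinePair {k : ℕ} (Λ : KGraph k) (P : Set Λ.Path) (μ ν : Λ.Path) : Prop :=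
  μ ∈ P ∧ ν ∈ P ∧ Λ.s μ = Λ.s ν ∧
    ∀ x : InfPath Λ, x.inSub P →
      ∀ z : InfPath Λ, Λ.IsExtension ν x z → Λ.IsExtension μ x z

/-- `Per_Γ` for the subgraph `Γ` of `Λ` determined by `P`:
the set of all `d μ − d ν` over cycline pairs `(μ, 1, ν)`. -/
def KGraph.PerPair {k : ℕ} (Λ : KGraph k) (P : Set Λ.Path) : Set (Fin k → ℤ) :=
  {m | ∃ μ ν, Λ.IsCyclinePair P μ ν ∧ m = fun i => (Λ.d μ i : ℤ) - (Λ.d ν i : ℤ)}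

/-- A self-similar `k`-graph `(G, Λ)`: an action of the countable discrete
group `G` on `Λ` together with a restriction map `(g, μ) ↦ g|_μ`. -/
structure SelfSimilarSys (k : ℕ) (G : Type) [Group G] [Countable G] (Λ : KGraph k) where
  act : G → Λ.Path → Λ.Path
  res : G → Λ.Path → G
  act_one : ∀ μ, act 1 μ = μ
  act_mul : ∀ g h μ, act (g * h) μ = act g (act h μ)
  d_act : ∀ g μ, Λ.d (act g μ) = Λ.d μ
  s_act : ∀ g μ, Λ.s (act g μ) = act g (Λ.s μ)
  r_act : ∀ g μ, Λ.r (act g μ) = act g (Λ.r μ)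
  act_comp : ∀ g μ ν, Λ.s μ = Λ.r ν →
    act g (Λ.comp μ ν) = Λ.comp (act g μ) (act (res g μ) ν)
  res_vertex : ∀ g v, Λ.IsVertex v → res g v = g
  res_comp : ∀ g μ ν, Λ.s μ = Λ.r ν → res g (Λ.comp μ ν) = res (res g μ) ν
  res_one : ∀ μ, res 1 μ = 1
  res_mul : ∀ g h μ, res (g * h) μ = res g (act h μ) * res h μ

namespace SelfSimilarSys

variable {k : ℕ} {G : Type} [Group G] [Countable G] {Λ : KGraph k}

/-- `(G, Λ)` is pseudo free: `g·μ = μ` and `g|_μ = 1` imply `g = 1`. -/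
def PseudoFree (S : SelfSimilarSys k G Λ) : Prop :=
  ∀ g μ, S.act g μ = μ → S.res g μ = 1 → g = 1

/-- `y = g · x` for infinite paths: `y(0, n) = g · x(0, n)` for all `n`. -/
def IsGAct (S : SelfSimilarSys k G Λ) (g : G) (x y : InfPath Λ) : Prop :=
  ∀ n, y.val 0 n = S.act g (x.val 0 n)

/-- A cycline triple `(μ, g, ν)` of the subgraph of `Λ` determined by `P`:
`s μ = g · s ν` and `μ (g · x) = ν x` for every infinite path `x` of the
subgraph with range `s ν`. -/
def IsCyclineTriple (S : SelfSimilarSys k G Λ) (P : Set Λ.Path)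
    (μ : Λ.Path) (g : G) (ν : Λ.Path) : Prop :=
  μ ∈ P ∧ ν ∈ P ∧ Λ.s μ = S.act g (Λ.s ν) ∧
    ∀ x : InfPath Λ, x.inSub P → Λ.s ν = x.val 0 0 →
      ∀ y : InfPath Λ, S.IsGAct g x y →
        ∀ z : InfPath Λ, Λ.IsExtension ν x z → Λ.IsExtension μ y z

/-- `Per_{G,Γ}` for the subgraph `Γ` of `Λ` determined by `P`:
the set of all `d μ − d ν` over cycline triples `(μ, g, ν)`. -/
def PerTriple (S : SelfSimilarSys k G Λ) (P : Set Λ.Path) : Set (Fin k → ℤ) :=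
  {m | ∃ μ g ν, S.IsCyclineTriple P μ g ν ∧ m = fun i => (Λ.d μ i : ℤ) - (Λ.d ν i : ℤ)}

/-- Membership `y ∈ [x]`: `y` is an infinite path of `ΛT` and
`σ^p x = g · σ^q y` for some `p, q ∈ ℕ^k` and `g ∈ G`. -/
def ClassMem (S : SelfSimilarSys k G Λ) (T : Set Λ.Path) (x y : InfPath Λ) : Prop :=
  y.inSub (Λ.tailPaths T) ∧ ∃ p q : Fin k → ℕ, ∃ g : G, S.IsGAct g (y.shift q) (x.shift p)

end SelfSimilarSys

/-- `H_T`: the vertices `v ∈ T` such that for all `p, q ∈ ℕ^k` with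
`p − q ∈ Per_{ΛT}` and every `μ ∈ v Λ^p T` there is a unique `ν ∈ v Λ^q T`
with `(μ, 1, ν)` a cycline pair of `ΛT`. -/
def KGraph.HSet {k : ℕ} (Λ : KGraph k) (T : Set Λ.Path) : Set Λ.Path :=
  {v | v ∈ T ∧ ∀ p q : Fin k → ℕ,
    (fun i => (p i : ℤ) - (q i : ℤ)) ∈ Λ.PerPair (Λ.tailPaths T) →
      ∀ μ, Λ.r μ = v → Λ.d μ = p → Λ.s μ ∈ T →
        ∃! ν, Λ.r ν = v ∧ Λ.d ν = q ∧ Λ.IsCyclinePair (Λ.tailPaths T) μ ν}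

open scoped Classical

/-- The class `[x]`, as an index type. -/
def ClsIdx {k : ℕ} {G : Type} [Group G] [Countable G] {Λ : KGraph k}
    (S : SelfSimilarSys k G Λ) (T : Set Λ.Path) (x : InfPath Λ) : Type :=
  {y : InfPath Λ // S.ClassMem T x y}

/-- The Hilbert space `ℓ²([x])`. -/
noncomputable abbrev ClsH {k : ℕ} {G : Type} [Group G] [Countable G] {Λ : KGraph k}
    (S : SelfSimilarSys k G Λ) (T : Set Λ.Path) (x : InfPath Λ) : Type :=
  lp (fun _ : ClsIdx S T x => ℂ) 2

/-- The basis vector `δ_y` of `ℓ²([x])`. -/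
noncomputable def delta {k : ℕ} {G : Type} [Group G] [Countable G] {Λ : KGraph k}
    (S : SelfSimilarSys k G Λ) (T : Set Λ.Path) (x : InfPath Λ)
    (y : ClsIdx S T x) : ClsH S T x :=
  lp.single 2 y (1 : ℂ)

/-! A bounded operator `A` commuting with every `S_μ` and `U_g` is diagonal in the basis `δ_y`:
writing `μ = y(0, n)`, commutation with `S_μ` gives `f(d μ) A δ_y = S_μ A δ_{σⁿ y}`, which is
supported on the paths beginning with `μ`, and `y` is the only path beginning with all of its
initial segments. The diagonal entry `⟨A δ_y, δ_y⟩` is unchanged under `y ↦ σⁿ y` (again by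
commutation with `S_μ`) and under `y ↦ g · y` (by commutation with `U_g`); since every `y ∈ [x]`
is joined to `x` by such moves, the diagonal is constant. -/

namespace lp

variable {ι : Type*}

theorem hasSum_map_apply (B : lp (fun _ : ι => ℂ) 2 →L[ℂ] lp (fun _ : ι => ℂ) 2)
    (v : lp (fun _ : ι => ℂ) 2) (w : ι) :
    HasSum (fun z => v z * B (lp.single 2 z 1) w) (B v w) := by
  have hsingle : ∀ z, lp.single 2 z (v z) = v z • lp.single (E := fun _ : ι => ℂ) 2 z 1 :=
    fun z => by rw [← lp.single_smul, smul_eq_mul, mul_one]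
  have h := (lp.hasSum_single ENNReal.ofNat_ne_top v).mapL
    ((lp.evalCLM ℂ (fun _ : ι => ℂ) 2 w).comp B)
  simp only [hsingle, ContinuousLinearMap.comp_apply, map_smul, smul_eq_mul] at h
  exact h

theorem map_apply_eq_of_map_single_apply_eq_zero
    (B : lp (fun _ : ι => ℂ) 2 →L[ℂ] lp (fun _ : ι => ℂ) 2) (v : lp (fun _ : ι => ℂ) 2)
    {w z₀ : ι} (h : ∀ z ≠ z₀, B (lp.single 2 z 1) w = 0) :
    B v w = v z₀ * B (lp.single 2 z₀ 1) w :=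
  (hasSum_map_apply B v w).unique (hasSum_single z₀ fun z hz => by rw [h z hz, mul_zero])

theorem map_apply_eq_zero_of_map_single_apply_eq_zero
    (B : lp (fun _ : ι => ℂ) 2 →L[ℂ] lp (fun _ : ι => ℂ) 2) (v : lp (fun _ : ι => ℂ) 2)
    {w : ι} (h : ∀ z, B (lp.single 2 z 1) w = 0) : B v w = 0 := by
  rw [map_apply_eq_of_map_single_apply_eq_zero B v fun z _ => h z, h w, mul_zero]

theorem continuousLinearMap_ext_single
    {B C : lp (fun _ : ι => ℂ) 2 →L[ℂ] lp (fun _ : ι => ℂ) 2}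
    (h : ∀ i, B (lp.single 2 i 1) = C (lp.single 2 i 1)) : B = C :=
  lp.ext_continuousLinearMap ENNReal.ofNat_ne_top fun i =>
    ContinuousLinearMap.ext_ring (h i)

end lp

section Paths

variable {k : ℕ} {Λ : KGraph k}

theorem KGraph.factor_unique {α β α' β' : Λ.Path}
    (h : Λ.s α = Λ.r β) (h' : Λ.s α' = Λ.r β')
    (hα : Λ.d α = Λ.d α') (hβ : Λ.d β = Λ.d β')
    (hc : Λ.comp α β = Λ.comp α' β') : α = α' ∧ β = β' := by
  obtain ⟨_, -, hu⟩ := Λ.factor (Λ.comp α β) (Λ.d α) (Λ.d β) (Λ.d_comp α β h)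
  exact Prod.mk.inj
    ((hu (α, β) ⟨h, rfl, rfl, rfl⟩).trans (hu (α', β') ⟨h', hα.symm, hβ.symm, hc.symm⟩).symm)

namespace InfPath

theorem comp_val_zero (y : InfPath Λ) (m n : Fin k → ℕ) :
    Λ.comp (y.val 0 m) (y.val m n) = y.val 0 (m + n) := by
  simpa only [zero_add] using y.comp_val 0 m n

theorem s_val_zero (y : InfPath Λ) (m n : Fin k → ℕ) :
    Λ.s (y.val 0 m) = Λ.r (y.val m n) := by
  rw [y.s_val, y.r_val, zero_add]

@[simp]
theorem shift_val_zero (y : InfPath Λ) (m n : Fin k → ℕ) :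
    (y.shift m).val 0 n = y.val m n := by
  simp [shift]

theorem ext_of_val_zero {y z : InfPath Λ} (h : ∀ n, y.val 0 n = z.val 0 n) : y = z := by
  have key : ∀ p n, y.val p n = z.val p n := fun p n =>
    (KGraph.factor_unique (y.s_val_zero p n) (z.s_val_zero p n) (by rw [y.d_val, z.d_val])
      (by rw [y.d_val, z.d_val]) (by rw [y.comp_val_zero, z.comp_val_zero, h])).2
  cases y; cases z
  simp only [InfPath.mk.injEq]
  funext p n
  exact key p n

theorem isExtension_shift (y : InfPath Λ) (n : Fin k → ℕ) :
    Λ.IsExtension (y.val 0 n) (y.shift n) y :=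
  ⟨y.s_val 0 n, fun m => by rw [y.d_val]; exact (y.comp_val 0 n m).symm⟩

end InfPath

namespace KGraph.IsExtension

variable {μ : Λ.Path} {u u' w w' : InfPath Λ}

theorem val_zero_d (h : Λ.IsExtension μ u w) : w.val 0 (Λ.d μ) = μ := by
  rw [← add_zero (Λ.d μ), h.2 0, ← h.1, Λ.comp_id]

theorem unique (h : Λ.IsExtension μ u w) (h' : Λ.IsExtension μ u w') : w = w' := by
  refine InfPath.ext_of_val_zero fun n => (KGraph.factor_unique (w.s_val_zero n (Λ.d μ))
    (w'.s_val_zero n (Λ.d μ)) (by rw [w.d_val, w'.d_val]) (by rw [w.d_val, w'.d_val]) ?_).1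
  rw [w.comp_val_zero, w'.comp_val_zero, add_comm, h.2, h'.2]

theorem inj (h : Λ.IsExtension μ u w) (h' : Λ.IsExtension μ u' w) : u = u' :=
  InfPath.ext_of_val_zero fun n =>
    (KGraph.factor_unique (by rw [u.r_val]; exact h.1) (by rw [u'.r_val]; exact h'.1) rfl
      (by rw [u.d_val, u'.d_val]) ((h.2 n).symm.trans (h'.2 n))).2

end KGraph.IsExtension

end Paths

section Action

variable {k : ℕ} {G : Type} [Group G] [Countable G] {Λ : KGraph k} {S : SelfSimilarSys k G Λ}

namespace SelfSimilarSys.IsGAct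

variable {g : G} {u z z' : InfPath Λ}

theorem inv (h : S.IsGAct g u z) : S.IsGAct g⁻¹ z u := fun n => by
  rw [h n, ← S.act_mul, inv_mul_cancel, S.act_one]

theorem unique (h : S.IsGAct g u z) (h' : S.IsGAct g u z') : z = z' :=
  InfPath.ext_of_val_zero fun n => (h n).trans (h' n).symm

theorem shift (hfix : ∀ g v, Λ.IsVertex v → S.act g v = v) (h : S.IsGAct g u z)
    (m : Fin k → ℕ) : S.IsGAct (S.res g (u.val 0 m)) (u.shift m) (z.shift m) := by
  intro n
  -- `hfix` gives `g · s μ = g|_μ · s μ`, so the two acted factors still compose.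
  have hsr : Λ.s (S.act g (u.val 0 m)) = Λ.r (S.act (S.res g (u.val 0 m)) (u.val m n)) := by
    rw [S.s_act, S.r_act, u.s_val, u.r_val, zero_add, hfix _ _ (u.d_val m 0),
      hfix _ _ (u.d_val m 0)]
  have hc : Λ.comp (z.val 0 m) (z.val m n) =
      Λ.comp (S.act g (u.val 0 m)) (S.act (S.res g (u.val 0 m)) (u.val m n)) := by
    rw [z.comp_val_zero, ← S.act_comp _ _ _ (u.s_val_zero m n), u.comp_val_zero, h]
  rw [InfPath.shift_val_zero, InfPath.shift_val_zero]
  exact (KGraph.factor_unique (z.s_val_zero m n) hsr (by rw [z.d_val, S.d_act, u.d_val])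
    (by rw [z.d_val, S.d_act, u.d_val]) hc).2

end SelfSimilarSys.IsGAct

theorem SelfSimilarSys.classMem_self {T : Set Λ.Path} {x : InfPath Λ}
    (hx : x.inSub (Λ.tailPaths T)) : S.ClassMem T x x :=
  ⟨hx, 0, 0, 1, fun n => by rw [S.act_one]⟩

theorem SelfSimilarSys.ClassMem.shift (hfix : ∀ g v, Λ.IsVertex v → S.act g v = v)
    {T : Set Λ.Path} {x y : InfPath Λ} (h : S.ClassMem T x y) (m : Fin k → ℕ) :
    S.ClassMem T x (y.shift m) := by
  obtain ⟨hsub, p, q, g, hg⟩ := h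
  refine ⟨fun a n => hsub (a + m) n, m + p, q, S.res g ((y.shift q).val 0 m), fun n => ?_⟩
  have h := hg.shift hfix m n
  simp only [InfPath.shift, zero_add] at h ⊢
  rwa [add_comm q m]

end Action

section Operators

variable {k : ℕ} {G : Type} [Group G] [Countable G] {Λ : KGraph k}
  {S : SelfSimilarSys k G Λ} {T : Set Λ.Path} {x : InfPath Λ}

theorem delta_apply (y w : ClsIdx S T x) :
    delta S T x y w = if w = y then 1 else 0 := by
  simp [delta, Pi.single_apply]

def IsPathOperators (S : SelfSimilarSys k G Λ) (T : Set Λ.Path) (x : InfPath Λ)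
    (f : (Fin k → ℤ) → ℂ) (SOp : Λ.Path → (ClsH S T x →L[ℂ] ClsH S T x)) : Prop :=
  ∀ μ, Λ.s μ ∈ T → ∀ y : ClsIdx S T x,
    (Λ.s μ = y.1.val 0 0 →
      ∃ z : ClsIdx S T x, Λ.IsExtension μ y.1 z.1 ∧
        SOp μ (delta S T x y) = f (fun i => (Λ.d μ i : ℤ)) • delta S T x z) ∧
    (Λ.s μ ≠ y.1.val 0 0 → SOp μ (delta S T x y) = 0)

def IsGroupOperators (S : SelfSimilarSys k G Λ) (T : Set Λ.Path) (x : InfPath Λ)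
    (UOp : G → (ClsH S T x →L[ℂ] ClsH S T x)) : Prop :=
  ∀ (g : G) (y : ClsIdx S T x), ∃ z : ClsIdx S T x,
    S.IsGAct g y.1 z.1 ∧ UOp g (delta S T x y) = delta S T x z

variable {f : (Fin k → ℤ) → ℂ} {SOp : Λ.Path → (ClsH S T x →L[ℂ] ClsH S T x)}
  {UOp : G → (ClsH S T x →L[ℂ] ClsH S T x)} {μ : Λ.Path} {g : G} {u w : ClsIdx S T x}

namespace IsPathOperators

theorem map_delta (hS : IsPathOperators S T x f SOp) (hμ : Λ.s μ ∈ T)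
    (h : Λ.IsExtension μ u.1 w.1) :
    SOp μ (delta S T x u) = f (fun i => (Λ.d μ i : ℤ)) • delta S T x w := by
  obtain ⟨z, hz, hSz⟩ := (hS μ hμ u).1 h.1
  rwa [Subtype.ext (hz.unique h)] at hSz

theorem isExtension_of_map_delta_apply_ne_zero (hS : IsPathOperators S T x f SOp)
    (hμ : Λ.s μ ∈ T) (h : SOp μ (delta S T x u) w ≠ 0) : Λ.IsExtension μ u.1 w.1 := by
  by_cases hs : Λ.s μ = u.1.val 0 0
  · obtain ⟨z, hz, hSz⟩ := (hS μ hμ u).1 hs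
    obtain rfl : w = z := by
      by_contra hne
      simp [hSz, delta_apply, hne] at h
    exact hz
  · simp [(hS μ hμ u).2 hs] at h

theorem map_apply_of_isExtension (hS : IsPathOperators S T x f SOp) (hμ : Λ.s μ ∈ T)
    (h : Λ.IsExtension μ u.1 w.1) (v : ClsH S T x) :
    SOp μ v w = f (fun i => (Λ.d μ i : ℤ)) * v u := by
  rw [lp.map_apply_eq_of_map_single_apply_eq_zero (SOp μ) v (z₀ := u)]
  · rw [← delta, hS.map_delta hμ h, lp.coeFn_smul, Pi.smul_apply, delta_apply, if_pos rfl,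
      smul_eq_mul, mul_one, mul_comm]
  · intro z hz
    by_contra hne
    exact hz (Subtype.ext ((hS.isExtension_of_map_delta_apply_ne_zero hμ hne).inj h))

theorem map_apply_eq_zero (hS : IsPathOperators S T x f SOp) (hμ : Λ.s μ ∈ T)
    (h : w.1.val 0 (Λ.d μ) ≠ μ) (v : ClsH S T x) : SOp μ v w = 0 :=
  lp.map_apply_eq_zero_of_map_single_apply_eq_zero (SOp μ) v fun _ => by
    by_contra hne
    exact h (hS.isExtension_of_map_delta_apply_ne_zero hμ hne).val_zero_d

end IsPathOperators

namespace IsGroupOperators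

theorem map_delta (hU : IsGroupOperators S T x UOp) (h : S.IsGAct g u.1 w.1) :
    UOp g (delta S T x u) = delta S T x w := by
  obtain ⟨z, hz, hUz⟩ := hU g u
  rwa [Subtype.ext (hz.unique h)] at hUz

theorem map_apply (hU : IsGroupOperators S T x UOp) (h : S.IsGAct g u.1 w.1)
    (v : ClsH S T x) : UOp g v w = v u := by
  rw [lp.map_apply_eq_of_map_single_apply_eq_zero (UOp g) v (z₀ := u), ← delta,
    hU.map_delta h, delta_apply, if_pos rfl, mul_one]
  intro z hz
  obtain ⟨e, he, hUe⟩ := hU g z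
  rw [← delta, hUe, delta_apply, if_neg]
  rintro rfl
  exact hz (Subtype.ext (he.inv.unique h.inv))

end IsGroupOperators

variable {A : ClsH S T x →L[ℂ] ClsH S T x}

theorem smul_map_delta_eq_map_map_delta_shift (hS : IsPathOperators S T x f SOp)
    (hA : ∀ μ, Λ.s μ ∈ T → Commute A (SOp μ)) {y y' : ClsIdx S T x} {n : Fin k → ℕ}
    (hy' : y'.1 = y.1.shift n) :
    f (fun i => (Λ.d (y.1.val 0 n) i : ℤ)) • A (delta S T x y) =
      SOp (y.1.val 0 n) (A (delta S T x y')) := by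
  have hext : Λ.IsExtension (y.1.val 0 n) y'.1 y.1 := hy' ▸ y.1.isExtension_shift n
  rw [← map_smul, ← hS.map_delta (y.2.1 0 n) hext]
  exact DFunLike.congr_fun (hA _ (y.2.1 0 n)).eq _

theorem commutant_map_delta_apply_eq_zero (hfix : ∀ g v, Λ.IsVertex v → S.act g v = v)
    (hf : ∀ a, f a ≠ 0) (hS : IsPathOperators S T x f SOp)
    (hA : ∀ μ, Λ.s μ ∈ T → Commute A (SOp μ)) {y w : ClsIdx S T x} (hw : w ≠ y) :
    A (delta S T x y) w = 0 := by
  obtain ⟨n, hn⟩ : ∃ n, w.1.val 0 n ≠ y.1.val 0 n := by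
    by_contra! h
    exact hw (Subtype.ext (InfPath.ext_of_val_zero h))
  have h := congrArg (· w) (smul_map_delta_eq_map_map_delta_shift hS hA
    (y' := ⟨y.1.shift n, y.2.shift hfix n⟩) rfl)
  simp only [lp.coeFn_smul, Pi.smul_apply, smul_eq_mul] at h
  rw [hS.map_apply_eq_zero (y.2.1 0 n) (by rwa [y.1.d_val])] at h
  exact (mul_eq_zero.mp h).resolve_left (hf _)

theorem commutant_map_delta_apply_shift (hf : ∀ a, f a ≠ 0) (hS : IsPathOperators S T x f SOp)
    (hA : ∀ μ, Λ.s μ ∈ T → Commute A (SOp μ)) {y y' : ClsIdx S T x} {n : Fin k → ℕ}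
    (hy' : y'.1 = y.1.shift n) :
    A (delta S T x y') y' = A (delta S T x y) y := by
  have h := congrArg (· y) (smul_map_delta_eq_map_map_delta_shift hS hA hy')
  simp only [lp.coeFn_smul, Pi.smul_apply, smul_eq_mul] at h
  rw [hS.map_apply_of_isExtension (y.2.1 0 n) (hy' ▸ y.1.isExtension_shift n)] at h
  exact (mul_left_cancel₀ (hf _) h).symm

theorem commutant_map_delta_apply_of_isGAct (hU : IsGroupOperators S T x UOp)
    (hA : ∀ g, Commute A (UOp g)) {y z : ClsIdx S T x} (h : S.IsGAct g y.1 z.1) :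
    A (delta S T x z) z = A (delta S T x y) y :=
  calc A (delta S T x z) z = A (UOp g (delta S T x y)) z := by rw [hU.map_delta h]
    _ = UOp g (A (delta S T x y)) z := congrArg (· z) (DFunLike.congr_fun (hA g).eq _)
    _ = A (delta S T x y) y := hU.map_apply h _

theorem commutant_map_delta_apply_self_eq (hfix : ∀ g v, Λ.IsVertex v → S.act g v = v)
    (hx : x.inSub (Λ.tailPaths T)) (hf : ∀ a, f a ≠ 0) (hS : IsPathOperators S T x f SOp)
    (hU : IsGroupOperators S T x UOp) (hAS : ∀ μ, Λ.s μ ∈ T → Commute A (SOp μ))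
    (hAU : ∀ g, Commute A (UOp g)) (y : ClsIdx S T x) :
    A (delta S T x y) y = A (delta S T x ⟨x, S.classMem_self hx⟩) ⟨x, S.classMem_self hx⟩ := by
  obtain ⟨p, q, g, hg⟩ := y.2.2
  let x₀ : ClsIdx S T x := ⟨x, S.classMem_self hx⟩
  calc A (delta S T x y) y
      = A (delta S T x ⟨_, y.2.shift hfix q⟩) ⟨_, y.2.shift hfix q⟩ :=
        (commutant_map_delta_apply_shift hf hS hAS rfl).symm
    _ = A (delta S T x ⟨_, x₀.2.shift hfix p⟩) ⟨_, x₀.2.shift hfix p⟩ :=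
        (commutant_map_delta_apply_of_isGAct hU hAU hg).symm
    _ = A (delta S T x x₀) x₀ := commutant_map_delta_apply_shift hf hS hAS rfl

theorem commutant_map_delta_eq_smul (hfix : ∀ g v, Λ.IsVertex v → S.act g v = v)
    (hx : x.inSub (Λ.tailPaths T)) (hf : ∀ a, f a ≠ 0) (hS : IsPathOperators S T x f SOp)
    (hU : IsGroupOperators S T x UOp) (hAS : ∀ μ, Λ.s μ ∈ T → Commute A (SOp μ))
    (hAU : ∀ g, Commute A (UOp g)) (y : ClsIdx S T x) :
    A (delta S T x y) =
      A (delta S T x ⟨x, S.classMem_self hx⟩) ⟨x, S.classMem_self hx⟩ • delta S T x y := by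
  refine lp.ext (funext fun w => ?_)
  by_cases hw : w = y
  · subst hw
    simp [commutant_map_delta_apply_self_eq hfix hx hf hS hU hAS hAU w, delta_apply]
  · simp [commutant_map_delta_apply_eq_zero hfix hf hS hAS hw, delta_apply, hw]

end Operators

theorem representation_is_irreducible_general
    {k : ℕ} (G : Type) [Group G] [Countable G] (Λ : KGraph k)
    (S : SelfSimilarSys k G Λ)
    (hfix : ∀ g v, Λ.IsVertex v → S.act g v = v)
    (T : Set Λ.Path)
    (x : InfPath Λ) (hx : x.inSub (Λ.tailPaths T))
    (f : (Fin k → ℤ) → ℂ) (hfnorm : ∀ a, ‖f a‖ = 1)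
    -- the operators S_μ and U_g, given by their action on the basis vectors
    (SOp : Λ.Path → (ClsH S T x →L[ℂ] ClsH S T x))
    (UOp : G → (ClsH S T x →L[ℂ] ClsH S T x))
    (hS : ∀ μ, Λ.s μ ∈ T → ∀ y : ClsIdx S T x,
      (Λ.s μ = y.1.val 0 0 →
        ∃ z : ClsIdx S T x, Λ.IsExtension μ y.1 z.1 ∧
          SOp μ (delta S T x y) = f (fun i => (Λ.d μ i : ℤ)) • delta S T x z) ∧
      (Λ.s μ ≠ y.1.val 0 0 → SOp μ (delta S T x y) = 0))
    (hU : ∀ (g : G) (y : ClsIdx S T x), ∃ z : ClsIdx S T x,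
      S.IsGAct g y.1 z.1 ∧ UOp g (delta S T x y) = delta S T x z) :
    -- irreducibility
    ∀ A : ClsH S T x →L[ℂ] ClsH S T x,
      (∀ μ, Λ.s μ ∈ T → A * SOp μ = SOp μ * A) →
      (∀ g : G, A * UOp g = UOp g * A) →
      ∃ c : ℂ, A = c • (1 : ClsH S T x →L[ℂ] ClsH S T x) := by
  intro A hAS hAU
  have hf : ∀ a, f a ≠ 0 := fun a h0 => by simpa [h0] using hfnorm a
  exact ⟨_, lp.continuousLinearMap_ext_single fun y =>
    commutant_map_delta_eq_smul hfix hx hf hS hU hAS hAU y⟩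

/-- For a pseudo free self-similar `k`-graph `(G, Λ)` with `g · v = v` for
vertices, a maximal tail `T` such that every cycline triple of `(G, ΛT)` is a
cycline pair, a cofinal infinite path `x` of `ΛT`, and a homomorphism
`f : ℤ^k → 𝕋`: the family `{S_μ : μ ∈ ΛT} ∪ {U_g : g ∈ G}` acts irreducibly
on `ℓ²([x])`, i.e. any bounded operator commuting with all of them is a
scalar multiple of the identity. -/
theorem representation_is_irreducible
    {k : ℕ} (G : Type) [Group G] [Countable G] (Λ : KGraph k)
    (hRF : Λ.RowFinite) (hSF : Λ.SourceFree)
    (S : SelfSimilarSys k G Λ) (hPF : S.PseudoFree)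
    (hfix : ∀ g v, Λ.IsVertex v → S.act g v = v)
    (T : Set Λ.Path) (hT : MaximalTail Λ T)
    (hcyc : ∀ μ g ν, S.IsCyclineTriple (Λ.tailPaths T) μ g ν → g = 1)
    (x : InfPath Λ) (hx : x.inSub (Λ.tailPaths T))
    (hcof : ∀ v ∈ T, ∃ m : Fin k → ℕ, ∃ μ,
      Λ.r μ = v ∧ Λ.s μ = x.val m 0 ∧ Λ.s μ ∈ T)
    (f : (Fin k → ℤ) → ℂ) (hf0 : f 0 = 1)
    (hfadd : ∀ a b, f (a + b) = f a * f b) (hfnorm : ∀ a, ‖f a‖ = 1)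
    -- the operators S_μ and U_g, given by their action on the basis vectors
    (SOp : Λ.Path → (ClsH S T x →L[ℂ] ClsH S T x))
    (UOp : G → (ClsH S T x →L[ℂ] ClsH S T x))
    (hS : ∀ μ, Λ.s μ ∈ T → ∀ y : ClsIdx S T x,
      (Λ.s μ = y.1.val 0 0 →
        ∃ z : ClsIdx S T x, Λ.IsExtension μ y.1 z.1 ∧
          SOp μ (delta S T x y) = f (fun i => (Λ.d μ i : ℤ)) • delta S T x z) ∧
      (Λ.s μ ≠ y.1.val 0 0 → SOp μ (delta S T x y) = 0))
    (hU : ∀ (g : G) (y : ClsIdx S T x), ∃ z : ClsIdx S T x,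
      S.IsGAct g y.1 z.1 ∧ UOp g (delta S T x y) = delta S T x z) :
    -- irreducibility
    ∀ A : ClsH S T x →L[ℂ] ClsH S T x,
      (∀ μ, Λ.s μ ∈ T → A * SOp μ = SOp μ * A) →
      (∀ g : G, A * UOp g = UOp g * A) →
      ∃ c : ℂ, A = c • (1 : ClsH S T x →L[ℂ] ClsH S T x) :=
  representation_is_irreducible_general G Λ S hfix T x hx f hfnorm SOp UOp hS hU
end

section
/- Let Λ be a row-finite source-free 1-graph and let T be a maximal tail of Λ with Per_{ΛT} ≠ 0. Then ΛT contains a cycle without entrances, and the vertex set of this cycle equals H_T; in particular H_T ΛT is strongly connected (for all u, w ∈ H_T, uΛw ∩ ΛT ≠ ∅). -/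
/-!
A cycline pair `(μ, 1, ν)` of `ΛT` with `d μ = d ν + q`, `q > 0`, forces `μ x = ν x` for every
infinite path `x` of `ΛT` from `s ν`; cancelling `ν` gives `μ = ν x(0, q)` and `σ^q x = x`, so all
these paths are `q`-periodic and begin with the same path of length `q`, hence coincide: `s ν`
emits a unique infinite path in `ΛT`, and it is periodic. Prepending finite paths shows that every
vertex on a unique path again emits a unique infinite path of `ΛT` and that every finite path of
`ΛT` leaving it is a segment of it; so the first period of the path is a cycle without entrances.
Since `T` is directed, any two unique paths eventually coincide. Hence every element of
`Per_{ΛT}` is a period of the cycle, which gives its vertices the property defining `H_T`;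
conversely a vertex of `H_T` carries a periodic unique path by the forcing argument, and this
path must run through the cycle.
-/

namespace KGraph

variable {k : ℕ} {Λ : KGraph k}

theorem s_eq_self_of_d_eq_zero {v : Λ.Path} (h : Λ.d v = 0) : Λ.s v = v := by
  rw [Λ.eq_r_of_d_eq_zero v h, Λ.s_r]

theorem comp_cancel {α β α' β' : Λ.Path} (h : Λ.s α = Λ.r β) (h' : Λ.s α' = Λ.r β')
    (hd : Λ.d α = Λ.d α') (hc : Λ.comp α β = Λ.comp α' β') : α = α' ∧ β = β' := by
  have hdβ : Λ.d β' = Λ.d β := by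
    have := Λ.d_comp α' β' h'
    rw [← hc, Λ.d_comp α β h, hd] at this
    exact (add_left_cancel this).symm
  obtain ⟨_, -, huniq⟩ := Λ.factor (Λ.comp α β) (Λ.d α) (Λ.d β) (Λ.d_comp α β h)
  exact Prod.ext_iff.mp ((huniq (α, β) ⟨h, rfl, rfl, rfl⟩).trans
    (huniq (α', β') ⟨h', hd.symm, hdβ, hc.symm⟩).symm)

def vertices (Λ : KGraph k) (μ : Λ.Path) : Set Λ.Path :=
  {v | ∃ α β, Λ.s α = Λ.r β ∧ Λ.comp α β = μ ∧ Λ.s α = v}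

end KGraph

theorem MaximalTail.r_mem {k : ℕ} {Λ : KGraph k} {T : Set Λ.Path} (hT : MaximalTail Λ T)
    {μ : Λ.Path} (h : Λ.s μ ∈ T) : Λ.r μ ∈ T :=
  hT.backward_closed _ (Λ.d_r μ) _ h ⟨μ, rfl, rfl⟩

open KGraph

namespace InfPath

variable {k : ℕ} {Λ : KGraph k}

theorem ext {x y : InfPath Λ} (h : x.val = y.val) : x = y := by
  cases x; cases y; cases h; rfl

@[simp] theorem shift_val (x : InfPath Λ) (n p m : Fin k → ℕ) :
    (x.shift n).val p m = x.val (p + n) m := rfl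

theorem shift_zero (x : InfPath Λ) : x.shift 0 = x :=
  ext <| funext fun p => funext fun m => by rw [shift_val, add_zero]

theorem shift_shift (x : InfPath Λ) (a b : Fin k → ℕ) : (x.shift a).shift b = x.shift (a + b) :=
  ext <| funext fun p => funext fun m => by simp only [shift_val, add_assoc, add_comm b]

theorem shift_comm (x : InfPath Λ) (a b : Fin k → ℕ) : (x.shift a).shift b = (x.shift b).shift a := by
  rw [shift_shift, shift_shift, add_comm]

theorem shift_add_of_shift_eq_self {x : InfPath Λ} {c : Fin k → ℕ} (h : x.shift c = x)
    (a : Fin k → ℕ) : x.shift (c + a) = x.shift a := by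
  rw [← shift_shift, h]

theorem inSub_shift {P : Set Λ.Path} {x : InfPath Λ} (hx : x.inSub P) (n : Fin k → ℕ) :
    (x.shift n).inSub P :=
  fun p m => hx (p + n) m

theorem val_mem_of_inSub {T : Set Λ.Path} {x : InfPath Λ} (hx : x.inSub (Λ.tailPaths T))
    (p : Fin k → ℕ) : x.val p 0 ∈ T := by
  have h : Λ.s (x.val p 0) ∈ T := hx p 0
  rwa [s_eq_self_of_d_eq_zero (x.d_val p 0)] at h

theorem s_val_eq_r_val (x : InfPath Λ) (p m n : Fin k → ℕ) :
    Λ.s (x.val p m) = Λ.r (x.val (p + m) n) := by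
  rw [x.s_val, x.r_val]

theorem val_zero_comp (x : InfPath Λ) (m n : Fin k → ℕ) :
    Λ.comp (x.val 0 m) (x.val m n) = x.val 0 (m + n) := by
  simpa using x.comp_val 0 m n

theorem val_zero_eq_of_val_zero_add_eq {x y : InfPath Λ} {a c : Fin k → ℕ}
    (h : x.val 0 (a + c) = y.val 0 (a + c)) : x.val 0 a = y.val 0 a := by
  rw [← val_zero_comp x a c, ← val_zero_comp y a c] at h
  have hx := x.s_val_eq_r_val 0 a c
  have hy := y.s_val_eq_r_val 0 a c
  rw [zero_add] at hx hy
  exact (Λ.comp_cancel hx hy (by rw [x.d_val, y.d_val]) h).1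

theorem ext_val_zero {x y : InfPath Λ} (h : ∀ n, x.val 0 n = y.val 0 n) : x = y := by
  refine ext <| funext fun p => funext fun n => ?_
  have hc := h (p + n)
  rw [← val_zero_comp x p n, ← val_zero_comp y p n] at hc
  have hx := x.s_val_eq_r_val 0 p n
  have hy := y.s_val_eq_r_val 0 p n
  rw [zero_add] at hx hy
  exact (Λ.comp_cancel hx hy (by rw [x.d_val, y.d_val]) hc).2

theorem isExtension_val_shift (x : InfPath Λ) (a : Fin k → ℕ) :
    Λ.IsExtension (x.val 0 a) (x.shift a) x :=
  ⟨x.s_val 0 a, fun n => by rw [x.d_val, shift_val, zero_add, val_zero_comp]⟩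

def IsUniqueIn (P : Set Λ.Path) (x : InfPath Λ) : Prop :=
  x.inSub P ∧ ∀ y : InfPath Λ, y.inSub P → y.val 0 0 = x.val 0 0 → y = x

end InfPath

namespace KGraph.IsExtension

variable {k : ℕ} {Λ : KGraph k} {μ : Λ.Path} {x z : InfPath Λ}

theorem val_zero_d_s16 (h : Λ.IsExtension μ x z) : z.val 0 (Λ.d μ) = μ := by
  rw [← add_zero (Λ.d μ), h.2, ← h.1, Λ.comp_id]

theorem val_zero_zero (h : Λ.IsExtension μ x z) : z.val 0 0 = Λ.r μ := by
  rw [← z.r_val 0 (Λ.d μ), h.val_zero_d_s16]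

theorem unique_s16 {z' : InfPath Λ} (h : Λ.IsExtension μ x z) (h' : Λ.IsExtension μ x z') :
    z = z' :=
  InfPath.ext_val_zero fun n =>
    InfPath.val_zero_eq_of_val_zero_add_eq (c := Λ.d μ) (by rw [add_comm, h.2, h'.2])

theorem inj_s16 {y : InfPath Λ} (h : Λ.IsExtension μ x z) (h' : Λ.IsExtension μ y z) : x = y :=
  InfPath.ext_val_zero fun n =>
    (Λ.comp_cancel (by rw [x.r_val, h.1]) (by rw [y.r_val, h'.1]) rfl
      ((h.2 n).symm.trans (h'.2 n))).2

theorem comp {ν ε : Λ.Path} {y : InfPath Λ} (hν : Λ.IsExtension ν y z)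
    (hε : Λ.IsExtension ε x y) (h : Λ.s ν = Λ.r ε) : Λ.IsExtension (Λ.comp ν ε) x z :=
  ⟨by rw [Λ.s_comp _ _ h, hε.1], fun n => by
    rw [Λ.d_comp _ _ h, add_assoc, hν.2, hε.2, Λ.comp_assoc _ _ _ h (by rw [hε.1, x.r_val])]⟩

theorem eq_shift {x y : InfPath Λ} {a : Fin k → ℕ} (h : Λ.IsExtension (x.val 0 a) y x) :
    y = x.shift a :=
  h.inj_s16 (InfPath.isExtension_val_shift x a)

end KGraph.IsExtension

namespace KGraph

variable {Λ : KGraph 1}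

def deg (n : ℕ) : Fin 1 → ℕ := fun _ => n

@[simp] theorem deg_apply (n : ℕ) (i : Fin 1) : deg n i = n := rfl

theorem deg_add (a b : ℕ) : deg a + deg b = deg (a + b) := rfl

theorem deg_zero : deg 0 = 0 := rfl

theorem funext_fin_one {a b : Fin 1 → ℕ} (h : a 0 = b 0) : a = b :=
  funext fun i => by rw [Fin.fin_one_eq_zero i, h]

theorem deg_eval (m : Fin 1 → ℕ) : deg (m 0) = m := funext_fin_one rfl

def edgeSeg (e : ℕ → Λ.Path) (a : ℕ) : ℕ → Λ.Path
  | 0 => Λ.r (e a)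
  | m + 1 => Λ.comp (edgeSeg e a m) (e (a + m))

structure IsEdgeSeq (e : ℕ → Λ.Path) : Prop where
  d_eq : ∀ n, Λ.d (e n) = deg 1
  s_eq : ∀ n, Λ.s (e n) = Λ.r (e (n + 1))

namespace IsEdgeSeq

variable {e : ℕ → Λ.Path}

theorem s_edgeSeg (he : IsEdgeSeq e) (a m : ℕ) : Λ.s (edgeSeg e a m) = Λ.r (e (a + m)) := by
  induction m with
  | zero => exact Λ.s_r _
  | succ m ih => rw [edgeSeg, Λ.s_comp _ _ ih, he.s_eq]; rfl

theorem r_edgeSeg (he : IsEdgeSeq e) (a m : ℕ) : Λ.r (edgeSeg e a m) = Λ.r (e a) := by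
  induction m with
  | zero => exact Λ.r_r _
  | succ m ih => rw [edgeSeg, Λ.r_comp _ _ (he.s_edgeSeg a m), ih]

theorem d_edgeSeg (he : IsEdgeSeq e) (a m : ℕ) : Λ.d (edgeSeg e a m) = deg m := by
  induction m with
  | zero => exact Λ.d_r _
  | succ m ih => rw [edgeSeg, Λ.d_comp _ _ (he.s_edgeSeg a m), ih, he.d_eq]; rfl

theorem comp_edgeSeg (he : IsEdgeSeq e) (a m n : ℕ) :
    Λ.comp (edgeSeg e a m) (edgeSeg e (a + m) n) = edgeSeg e a (m + n) := by
  induction n with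
  | zero => rw [edgeSeg, ← he.s_edgeSeg, Λ.comp_id]; rfl
  | succ n ih =>
    rw [edgeSeg, ← Λ.comp_assoc _ _ _ ((he.s_edgeSeg a m).trans (he.r_edgeSeg _ n).symm)
      (he.s_edgeSeg _ n), ih, add_assoc]
    rfl

end IsEdgeSeq

end KGraph

namespace InfPath

variable {Λ : KGraph 1}

def ofEdges {e : ℕ → Λ.Path} (he : IsEdgeSeq e) : InfPath Λ where
  val p n := edgeSeg e (p 0) (n 0)
  d_val _ n := (he.d_edgeSeg _ _).trans (deg_eval n)
  r_val _ _ := he.r_edgeSeg _ _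
  s_val _ _ := he.s_edgeSeg _ _
  comp_val _ _ _ := he.comp_edgeSeg _ _ _

theorem inSub_ofEdges {T : Set Λ.Path} {e : ℕ → Λ.Path} (he : IsEdgeSeq e)
    (hT : ∀ n, Λ.r (e n) ∈ T) : (ofEdges he).inSub (Λ.tailPaths T) := fun p n => by
  show Λ.s (edgeSeg e (p 0) (n 0)) ∈ T
  rw [he.s_edgeSeg]
  exact hT _

def edge (x : InfPath Λ) (n : ℕ) : Λ.Path := x.val (deg n) (deg 1)

theorem isEdgeSeq_edge (x : InfPath Λ) : IsEdgeSeq x.edge :=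
  ⟨fun _ => x.d_val _ _, fun _ => x.s_val_eq_r_val _ _ _⟩

theorem edgeSeg_edge (x : InfPath Λ) (a m : ℕ) : edgeSeg x.edge a m = x.val (deg a) (deg m) := by
  induction m with
  | zero => exact x.r_val _ _
  | succ m ih => rw [edgeSeg, ih]; exact x.comp_val _ _ _

def consEdges (ε : Λ.Path) (x : InfPath Λ) : ℕ → Λ.Path
  | 0 => ε
  | n + 1 => x.edge n

theorem isEdgeSeq_consEdges {ε : Λ.Path} {x : InfPath Λ} (hε : Λ.d ε = deg 1)
    (hs : Λ.s ε = x.val 0 0) : IsEdgeSeq (consEdges ε x) where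
  d_eq
    | 0 => hε
    | _ + 1 => x.d_val _ _
  s_eq
    | 0 => hs.trans (x.r_val 0 (deg 1)).symm
    | n + 1 => x.isEdgeSeq_edge.s_eq n

theorem edgeSeg_consEdges (ε : Λ.Path) (x : InfPath Λ) (a m : ℕ) :
    edgeSeg (consEdges ε x) (a + 1) m = edgeSeg x.edge a m := by
  induction m with
  | zero => rfl
  | succ m ih => rw [edgeSeg, edgeSeg, ih, show a + 1 + m = a + m + 1 by omega]; rfl

theorem isExtension_ofEdges_consEdges {ε : Λ.Path} {x : InfPath Λ} (hε : Λ.d ε = deg 1)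
    (hs : Λ.s ε = x.val 0 0) : Λ.IsExtension ε x (ofEdges (isEdgeSeq_consEdges hε hs)) := by
  refine ⟨hs, fun n => ?_⟩
  show edgeSeg (consEdges ε x) 0 ((Λ.d ε + n) 0) = _
  rw [hε, Pi.add_apply, deg_apply, ← (isEdgeSeq_consEdges hε hs).comp_edgeSeg, zero_add,
    edgeSeg_consEdges, edgeSeg_edge, deg_eval, edgeSeg, edgeSeg]
  exact congrArg (Λ.comp · _) (Λ.id_comp ε)

end InfPath

namespace MaximalTail

variable {Λ : KGraph 1} {T : Set Λ.Path}

theorem exists_inSub (hT : MaximalTail Λ T) {v : Λ.Path} (hv : v ∈ T) :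
    ∃ x : InfPath Λ, x.inSub (Λ.tailPaths T) ∧ x.val 0 0 = v := by
  choose next hr hd hs using fun w : T => hT.reaches w w.2 (deg 1)
  let w : ℕ → T := fun n => Nat.rec ⟨v, hv⟩ (fun _ u => ⟨Λ.s (next u), hs u⟩) n
  have he : IsEdgeSeq fun n => next (w n) := ⟨fun n => hd _, fun n => (hr (w (n + 1))).symm⟩
  exact ⟨InfPath.ofEdges he, InfPath.inSub_ofEdges he fun n => (hr (w n)).symm ▸ (w n).2, hr _⟩

theorem exists_isExtension (hT : MaximalTail Λ T) {ξ : Λ.Path} {x : InfPath Λ}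
    (hx : x.inSub (Λ.tailPaths T)) (hξ : Λ.s ξ = x.val 0 0) :
    ∃ z : InfPath Λ, z.inSub (Λ.tailPaths T) ∧ Λ.IsExtension ξ x z := by
  obtain ⟨n, hn⟩ : ∃ n, Λ.d ξ = deg n := ⟨_, (deg_eval _).symm⟩
  induction n generalizing ξ x with
  | zero =>
    refine ⟨x, hx, hξ, fun m => ?_⟩
    have hv : ξ = Λ.r (x.val 0 m) := by
      rw [x.r_val, ← hξ, s_eq_self_of_d_eq_zero hn]
    rw [hn, deg_zero, zero_add, hv, Λ.id_comp]
  | succ n ih =>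
    obtain ⟨⟨ξ', ε⟩, ⟨hse, hd', hdε, hc⟩, -⟩ := Λ.factor ξ (deg n) (deg 1) hn
    dsimp only at hse hd' hdε hc
    subst hc
    have hε : Λ.s ε = x.val 0 0 := by rw [← hξ, Λ.s_comp _ _ hse]
    have hy := InfPath.inSub_ofEdges (InfPath.isEdgeSeq_consEdges hdε hε) fun
      | 0 => hT.r_mem (show Λ.s ε ∈ T by rw [hε]; exact InfPath.val_mem_of_inSub hx 0)
      | m + 1 => (x.r_val (deg m) (deg 1)).symm ▸ InfPath.val_mem_of_inSub hx (deg m)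
    obtain ⟨z, hz, hzy⟩ := ih hy hse hd'
    exact ⟨z, hz, hzy.comp (InfPath.isExtension_ofEdges_consEdges hdε hε) hse⟩

end MaximalTail

namespace InfPath

variable {Λ : KGraph 1} {x y : InfPath Λ} {p : ℕ}

theorem shift_deg_mul (h : x.shift (deg p) = x) (N : ℕ) : x.shift (deg (N * p)) = x := by
  induction N with
  | zero => rw [Nat.zero_mul]; exact shift_zero x
  | succ N ih => rw [Nat.succ_mul, ← deg_add, ← shift_shift, ih, h]

theorem val_add_deg_mul (h : x.shift (deg p) = x) (N : ℕ) (q n : Fin 1 → ℕ) :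
    x.val (q + deg (N * p)) n = x.val q n :=
  congrArg (fun y : InfPath Λ => y.val q n) (shift_deg_mul h N)

theorem val_deg_mod (h : x.shift (deg p) = x) (j : ℕ) (n : Fin 1 → ℕ) :
    x.val (deg (j % p)) n = x.val (deg j) n := by
  rw [← val_add_deg_mul h (j / p), deg_add, Nat.mod_add_div']

theorem eq_of_shift_eq_self (hp : 0 < p) (hx : x.shift (deg p) = x) (hy : y.shift (deg p) = y)
    (h : x.val 0 (deg p) = y.val 0 (deg p)) : x = y := by
  have hmul : ∀ N, x.val 0 (deg (N * p)) = y.val 0 (deg (N * p)) := by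
    intro N
    induction N with
    | zero => rw [Nat.zero_mul, deg_zero, ← x.r_val 0 (deg p), ← y.r_val 0 (deg p), h]
    | succ N ih =>
      have hx' := val_add_deg_mul hx 1 0 (deg (N * p))
      have hy' := val_add_deg_mul hy 1 0 (deg (N * p))
      rw [zero_add, one_mul] at hx' hy'
      rw [Nat.succ_mul, add_comm, ← deg_add, ← val_zero_comp, ← val_zero_comp, hx', hy', h, ih]
  refine ext_val_zero fun n => val_zero_eq_of_val_zero_add_eq (c := deg (n 0 * p - n 0)) ?_
  have hn : n + deg (n 0 * p - n 0) = deg (n 0 * p) :=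
    funext_fin_one (by simp [Nat.add_sub_cancel' (Nat.le_mul_of_pos_right (n 0) hp)])
  rw [hn, hmul]

theorem exists_eq_shift_of_shift_eq_shift (hp : 0 < p) (hy : y.shift (deg p) = y)
    {m m' : Fin 1 → ℕ} (h : x.shift m = y.shift m') : ∃ n, y = x.shift n := by
  refine ⟨m + deg (m' 0 * p - m' 0), ?_⟩
  have hm' : m' + deg (m' 0 * p - m' 0) = deg (m' 0 * p) :=
    funext_fin_one (by simp [Nat.add_sub_cancel' (Nat.le_mul_of_pos_right (m' 0) hp)])
  rw [← shift_shift, h, shift_shift, hm', shift_deg_mul hy]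

theorem vertices_val_of_shift_eq_self (hp : 0 < p) (hx : x.shift (deg p) = x) :
    Λ.vertices (x.val 0 (deg p)) = Set.range fun n => x.val n 0 := by
  ext v
  constructor
  · rintro ⟨α, β, hαβ, hc, rfl⟩
    have hd : Λ.d α + Λ.d β = deg p := by rw [← Λ.d_comp _ _ hαβ, hc, x.d_val]
    have hα := (Λ.comp_cancel hαβ (by simpa using x.s_val_eq_r_val 0 (Λ.d α) (Λ.d β))
      (x.d_val 0 _).symm (by rw [hc, val_zero_comp, hd])).1
    exact ⟨0 + Λ.d α, ((congrArg Λ.s hα).trans (x.s_val 0 _)).symm⟩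
  · rintro ⟨n, rfl⟩
    have hj : n 0 % p ≤ p := (Nat.mod_lt _ hp).le
    refine ⟨x.val 0 (deg (n 0 % p)), x.val (deg (n 0 % p)) (deg (p - n 0 % p)),
      by simpa using x.s_val_eq_r_val 0 _ _, ?_, ?_⟩
    · rw [val_zero_comp, deg_add, Nat.add_sub_cancel' hj]
    · rw [x.s_val, zero_add, val_deg_mod hx, deg_eval]

theorem exists_path_of_shift_eq_self (hp : 0 < p) (hx : x.shift (deg p) = x)
    (m n : Fin 1 → ℕ) : ∃ ξ, Λ.r ξ = x.val m 0 ∧ Λ.s ξ = x.val n 0 := by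
  refine ⟨x.val m (deg (n 0 + m 0 * p - m 0)), x.r_val _ _, ?_⟩
  have hmn : m + deg (n 0 + m 0 * p - m 0) = n + deg (m 0 * p) := by
    have := Nat.le_mul_of_pos_right (m 0) hp
    exact funext_fin_one (by simp; omega)
  rw [x.s_val, hmn, val_add_deg_mul hx]

end InfPath

namespace MaximalTail

open InfPath

variable {Λ : KGraph 1} {T : Set Λ.Path} {x y : InfPath Λ}

theorem isUniqueIn_shift (hT : MaximalTail Λ T) (hx : x.IsUniqueIn (Λ.tailPaths T))
    (m : Fin 1 → ℕ) : (x.shift m).IsUniqueIn (Λ.tailPaths T) := by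
  refine ⟨inSub_shift hx.1 m, fun y hy hy0 => ?_⟩
  obtain ⟨z, hz, hext⟩ := hT.exists_isExtension hy ((x.s_val 0 m).trans hy0.symm)
  rw [hx.2 z hz (by rw [hext.val_zero_zero, x.r_val])] at hext
  exact hext.eq_shift

theorem exists_eq_val (hT : MaximalTail Λ T) (hx : x.IsUniqueIn (Λ.tailPaths T))
    {m : Fin 1 → ℕ} {ξ : Λ.Path} (hr : Λ.r ξ = x.val m 0) (hs : Λ.s ξ ∈ T) :
    ∃ n, ξ = x.val m n := by
  obtain ⟨y, hy, hy0⟩ := hT.exists_inSub hs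
  obtain ⟨z, hz, hext⟩ := hT.exists_isExtension hy hy0.symm
  have hzx := (hT.isUniqueIn_shift hx m).2 z hz (by simpa [hext.val_zero_zero] using hr)
  exact ⟨Λ.d ξ, by simpa [hzx] using hext.val_zero_d_s16.symm⟩

theorem existsUnique_edge (hT : MaximalTail Λ T) (hx : x.IsUniqueIn (Λ.tailPaths T))
    (m : Fin 1 → ℕ) : ∃! e, Λ.r e = x.val m 0 ∧ Λ.d e = deg 1 ∧ Λ.s e ∈ T := by
  refine ⟨x.val m (deg 1), ⟨x.r_val _ _, x.d_val _ _, hx.1 _ _⟩, ?_⟩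
  rintro e ⟨hr, hd, hs⟩
  obtain ⟨n, rfl⟩ := hT.exists_eq_val hx hr hs
  rw [x.d_val] at hd
  rw [hd]

theorem exists_shift_eq_shift (hT : MaximalTail Λ T) (hx : x.IsUniqueIn (Λ.tailPaths T))
    (hy : y.IsUniqueIn (Λ.tailPaths T)) : ∃ m m', x.shift m = y.shift m' := by
  obtain ⟨_, hw, ⟨ρ, hρr, rfl⟩, ⟨ρ', hρ'r, hρρ'⟩⟩ :=
    hT.directed _ (val_mem_of_inSub hx.1 0) _ (val_mem_of_inSub hy.1 0)
  obtain ⟨m, rfl⟩ := hT.exists_eq_val hx hρr hw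
  obtain ⟨m', rfl⟩ := hT.exists_eq_val hy hρ'r (hρρ' ▸ hw)
  refine ⟨m, m', (hT.isUniqueIn_shift hy m').2 _ (inSub_shift hx.1 m) ?_⟩
  simpa [x.s_val, y.s_val] using hρρ'.symm

theorem isCyclinePair_val (hT : MaximalTail Λ T) (hx : x.IsUniqueIn (Λ.tailPaths T))
    {a b : Fin 1 → ℕ} (h : x.shift a = x.shift b) :
    Λ.IsCyclinePair (Λ.tailPaths T) (x.val 0 a) (x.val 0 b) := by
  refine ⟨hx.1 0 a, hx.1 0 b, ?_, fun y hy z hz => ?_⟩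
  · rw [x.s_val, x.s_val]
    exact congrArg (fun y : InfPath Λ => y.val 0 0) h
  · have hyx : y = x.shift b :=
      (hT.isUniqueIn_shift hx b).2 y hy (hz.1.symm.trans (x.s_val 0 b))
    rw [hyx] at hz
    rw [hyx, hz.unique_s16 (isExtension_val_shift x b), ← h]
    exact isExtension_val_shift x a

theorem isCyclinePair_symm (hT : MaximalTail Λ T) {μ ν : Λ.Path}
    (h : Λ.IsCyclinePair (Λ.tailPaths T) μ ν) : Λ.IsCyclinePair (Λ.tailPaths T) ν μ := by
  refine ⟨h.2.1, h.1, h.2.2.1.symm, fun x hx z hz => ?_⟩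
  obtain ⟨z', -, hz'⟩ := hT.exists_isExtension hx (h.2.2.1.symm.trans hz.1)
  rwa [hz.unique_s16 (h.2.2.2 x hx z' hz')]

theorem comp_val_and_shift_eq_self (hT : MaximalTail Λ T) {μ ν : Λ.Path}
    (h : Λ.IsCyclinePair (Λ.tailPaths T) μ ν) {q : ℕ} (hq : Λ.d μ = Λ.d ν + deg q)
    (hx : x.inSub (Λ.tailPaths T)) (hx0 : x.val 0 0 = Λ.s ν) :
    Λ.comp ν (x.val 0 (deg q)) = μ ∧ x.shift (deg q) = x := by
  obtain ⟨z, -, hν⟩ := hT.exists_isExtension hx hx0.symm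
  have hμ := h.2.2.2 x hx z hν
  have hνq : Λ.s ν = Λ.r (x.val 0 (deg q)) := by rw [x.r_val, hx0]
  have hsq : Λ.s (x.val 0 (deg q)) = Λ.r (x.val (deg q) 0) := by
    simpa using x.s_val_eq_r_val 0 (deg q) 0
  have hsplit : ∀ n, μ = Λ.comp ν (x.val 0 (deg q)) ∧ x.val 0 n = x.val (deg q) n := fun n =>
    Λ.comp_cancel (by rw [x.r_val, hμ.1]) (by rw [Λ.s_comp _ _ hνq, hsq, x.r_val, x.r_val])
      (by rw [Λ.d_comp _ _ hνq, x.d_val, hq])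
      (by rw [← hμ.2, hq, add_assoc, hν.2, ← val_zero_comp, Λ.comp_assoc _ _ _ hνq
        (by rw [hsq, x.r_val, x.r_val])])
  exact ⟨(hsplit 0).1.symm, ext_val_zero fun n => by simpa using (hsplit n).2.symm⟩

theorem exists_isUniqueIn_of_isCyclinePair (hT : MaximalTail Λ T) {μ ν : Λ.Path}
    (h : Λ.IsCyclinePair (Λ.tailPaths T) μ ν) {q : ℕ} (hq0 : 0 < q)
    (hq : Λ.d μ = Λ.d ν + deg q) :
    ∃ x : InfPath Λ, x.IsUniqueIn (Λ.tailPaths T) ∧ x.val 0 0 = Λ.s ν ∧ x.shift (deg q) = x := by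
  obtain ⟨x, hx, hx0⟩ := hT.exists_inSub h.2.1
  obtain ⟨hxμ, hxq⟩ := hT.comp_val_and_shift_eq_self h hq hx hx0
  refine ⟨x, ⟨hx, fun y hy hy0 => ?_⟩, hx0, hxq⟩
  obtain ⟨hyμ, hyq⟩ := hT.comp_val_and_shift_eq_self h hq hy (hy0.trans hx0)
  exact eq_of_shift_eq_self hq0 hyq hxq
    (Λ.comp_cancel (by rw [y.r_val, hy0, hx0]) (by rw [x.r_val, hx0]) rfl
      (hyμ.trans hxμ.symm)).2

theorem exists_isUniqueIn_of_mem_perPair (hT : MaximalTail Λ T) {D : Fin 1 → ℤ}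
    (hD : D ∈ Λ.PerPair (Λ.tailPaths T)) (hD0 : D 0 ≠ 0) :
    ∃ x : InfPath Λ, x.IsUniqueIn (Λ.tailPaths T) ∧ x.shift (deg (D 0).natAbs) = x := by
  obtain ⟨μ, ν, h, rfl⟩ := hD
  beta_reduce at hD0 ⊢
  rcases Nat.lt_or_gt_of_ne (by omega : Λ.d μ 0 ≠ Λ.d ν 0) with hlt | hlt
  · obtain ⟨x, hx, -, hxq⟩ := hT.exists_isUniqueIn_of_isCyclinePair (hT.isCyclinePair_symm h)
      (q := Λ.d ν 0 - Λ.d μ 0) (by omega) (funext_fin_one (by simp; omega))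
    exact ⟨x, hx, by rwa [show ((Λ.d μ 0 : ℤ) - Λ.d ν 0).natAbs = Λ.d ν 0 - Λ.d μ 0 by omega]⟩
  · obtain ⟨x, hx, -, hxq⟩ := hT.exists_isUniqueIn_of_isCyclinePair h
      (q := Λ.d μ 0 - Λ.d ν 0) (by omega) (funext_fin_one (by simp; omega))
    exact ⟨x, hx, by rwa [show ((Λ.d μ 0 : ℤ) - Λ.d ν 0).natAbs = Λ.d μ 0 - Λ.d ν 0 by omega]⟩

theorem shift_eq_shift_of_mem_perPair (hT : MaximalTail Λ T) (hx : x.IsUniqueIn (Λ.tailPaths T))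
    {p : ℕ} (hp : 0 < p) (hxp : x.shift (deg p) = x) {a b : Fin 1 → ℕ}
    (hD : (fun i => (a i : ℤ) - (b i : ℤ)) ∈ Λ.PerPair (Λ.tailPaths T)) :
    x.shift a = x.shift b := by
  by_cases hab : a 0 = b 0
  · rw [funext_fin_one hab]
  obtain ⟨y, hy, hyc⟩ := hT.exists_isUniqueIn_of_mem_perPair hD
    (show (a 0 : ℤ) - b 0 ≠ 0 by omega)
  obtain ⟨m, m', hm⟩ := hT.exists_shift_eq_shift hy hx
  obtain ⟨n, rfl⟩ := exists_eq_shift_of_shift_eq_shift hp hxp hm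
  have hc : (y.shift n).shift (deg ((a 0 : ℤ) - b 0).natAbs) = y.shift n := by
    rw [shift_comm, hyc]
  rcases le_total (b 0) (a 0) with hba | hab'
  · rw [← shift_add_of_shift_eq_self hc b]
    exact congrArg _ (funext_fin_one (by simp; omega))
  · rw [← shift_add_of_shift_eq_self hc a]
    exact congrArg _ (funext_fin_one (by simp; omega))

theorem val_zero_mem_hSet (hT : MaximalTail Λ T) (hx : x.IsUniqueIn (Λ.tailPaths T)) {p : ℕ}
    (hp : 0 < p) (hxp : x.shift (deg p) = x) : x.val 0 0 ∈ Λ.HSet T := by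
  refine ⟨val_mem_of_inSub hx.1 0, fun a b hD μ hr hd hs => ?_⟩
  obtain ⟨n, rfl⟩ := hT.exists_eq_val hx hr hs
  rw [x.d_val] at hd
  subst hd
  refine ⟨x.val 0 b, ⟨x.r_val 0 b, x.d_val 0 b,
    hT.isCyclinePair_val hx (hT.shift_eq_shift_of_mem_perPair hx hp hxp hD)⟩, ?_⟩
  rintro ν ⟨hνr, rfl, hν⟩
  obtain ⟨m, rfl⟩ := hT.exists_eq_val hx hνr hν.2.1
  rw [x.d_val]

theorem exists_val_eq_of_mem_hSet (hT : MaximalTail Λ T) (hx : x.IsUniqueIn (Λ.tailPaths T))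
    {p : ℕ} (hp : 0 < p) (hxp : x.shift (deg p) = x) {v : Λ.Path} (hv : v ∈ Λ.HSet T) :
    ∃ n, x.val n 0 = v := by
  have hper : (fun i => (deg p i : ℤ) - ((0 : Fin 1 → ℕ) i : ℤ)) ∈ Λ.PerPair (Λ.tailPaths T) :=
    ⟨_, _, hT.isCyclinePair_val hx (hxp.trans (shift_zero x).symm), by rw [x.d_val, x.d_val]⟩
  obtain ⟨μ, hμr, hμd, hμs⟩ := hT.reaches v hv.1 (deg p)
  obtain ⟨ν, ⟨hνr, hνd, hμν⟩, -⟩ := hv.2 _ _ hper μ hμr hμd hμs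
  have hνv : ν = v := (Λ.eq_r_of_d_eq_zero ν hνd).trans hνr
  subst hνv
  obtain ⟨y, hy, hy0, hyp⟩ :=
    hT.exists_isUniqueIn_of_isCyclinePair hμν hp (by rw [hμd, hνd, zero_add])
  obtain ⟨m, m', hm⟩ := hT.exists_shift_eq_shift hx hy
  obtain ⟨n, rfl⟩ := exists_eq_shift_of_shift_eq_shift hp hyp hm
  exact ⟨n, by simpa [s_eq_self_of_d_eq_zero hνd] using hy0⟩

theorem hSet_eq_range (hT : MaximalTail Λ T) (hx : x.IsUniqueIn (Λ.tailPaths T)) {p : ℕ}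
    (hp : 0 < p) (hxp : x.shift (deg p) = x) : Λ.HSet T = Set.range fun n => x.val n 0 := by
  refine Set.Subset.antisymm (fun v hv => hT.exists_val_eq_of_mem_hSet hx hp hxp hv) ?_
  rintro _ ⟨n, rfl⟩
  simpa using hT.val_zero_mem_hSet (hT.isUniqueIn_shift hx n) hp (by rw [shift_comm, hxp])

end MaximalTail

theorem cycle_without_entrances_of_periodic_tail_general
    (Λ : KGraph 1) (T : Set Λ.Path) (hT : MaximalTail Λ T)
    (hPer : ∃ m ∈ Λ.PerPair (Λ.tailPaths T), m ≠ 0) :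
    ∃ μ : Λ.Path,
      -- μ is a cycle in ΛT
      Λ.s μ ∈ T ∧ Λ.r μ = Λ.s μ ∧ Λ.d μ ≠ 0 ∧
      -- without entrances: every vertex on the cycle emits exactly one edge of ΛT
      (∀ v, (∃ α β, Λ.s α = Λ.r β ∧ Λ.comp α β = μ ∧ Λ.s α = v) →
        ∃! e, Λ.r e = v ∧ Λ.d e = (fun _ => 1) ∧ Λ.s e ∈ T) ∧
      -- the vertex set of the cycle is H_T
      {v | ∃ α β, Λ.s α = Λ.r β ∧ Λ.comp α β = μ ∧ Λ.s α = v} = Λ.HSet T ∧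
      -- H_T ΛT is strongly connected
      (∀ u ∈ Λ.HSet T, ∀ w ∈ Λ.HSet T, ∃ ξ, Λ.r ξ = u ∧ Λ.s ξ = w) := by
  obtain ⟨D, hD, hD_ne⟩ := hPer
  have hD0 : D 0 ≠ 0 := fun h => hD_ne (funext fun i => by rwa [Fin.fin_one_eq_zero i])
  obtain ⟨x, hx, hxp⟩ := hT.exists_isUniqueIn_of_mem_perPair hD hD0
  have hp : 0 < (D 0).natAbs := Int.natAbs_pos.2 hD0
  have hV := InfPath.vertices_val_of_shift_eq_self hp hxp
  have hH := hT.hSet_eq_range hx hp hxp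
  refine ⟨x.val 0 (deg (D 0).natAbs), hx.1 0 _, ?_, ?_, ?_, hV.trans hH.symm, ?_⟩
  · rw [x.r_val, x.s_val]
    exact (congrArg (fun y : InfPath Λ => y.val 0 0) hxp).symm
  · rw [x.d_val]
    exact fun h => hp.ne' (congrFun h 0)
  · intro v hv
    obtain ⟨n, rfl⟩ : v ∈ Set.range fun n => x.val n 0 := hV ▸ hv
    exact hT.existsUnique_edge hx n
  · rw [hH]
    rintro _ ⟨m, rfl⟩ _ ⟨n, rfl⟩
    exact InfPath.exists_path_of_shift_eq_self hp hxp m n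

/-- For a row-finite source-free `1`-graph `Λ` and a maximal tail `T` with
`Per_{ΛT} ≠ 0`: `ΛT` contains a cycle without entrances whose vertex set is
exactly `H_T`; in particular `H_T ΛT` is strongly connected. -/
theorem cycle_without_entrances_of_periodic_tail
    (Λ : KGraph 1) (hRF : Λ.RowFinite) (hSF : Λ.SourceFree)
    (T : Set Λ.Path) (hT : MaximalTail Λ T)
    (hPer : ∃ m ∈ Λ.PerPair (Λ.tailPaths T), m ≠ 0) :
    ∃ μ : Λ.Path,
      -- μ is a cycle in ΛT
      Λ.s μ ∈ T ∧ Λ.r μ = Λ.s μ ∧ Λ.d μ ≠ 0 ∧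
      -- without entrances: every vertex on the cycle emits exactly one edge of ΛT
      (∀ v, (∃ α β, Λ.s α = Λ.r β ∧ Λ.comp α β = μ ∧ Λ.s α = v) →
        ∃! e, Λ.r e = v ∧ Λ.d e = (fun _ => 1) ∧ Λ.s e ∈ T) ∧
      -- the vertex set of the cycle is H_T
      {v | ∃ α β, Λ.s α = Λ.r β ∧ Λ.comp α β = μ ∧ Λ.s α = v} = Λ.HSet T ∧
      -- H_T ΛT is strongly connected
      (∀ u ∈ Λ.HSet T, ∀ w ∈ Λ.HSet T, ∃ ξ, Λ.r ξ = u ∧ Λ.s ξ = w) :=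
  cycle_without_entrances_of_periodic_tail_general Λ T hT hPer
end

section
/- Let (G,Λ) be a pseudo free self-similar 1-graph with g·v = v for all g ∈ G, v ∈ Λ^0, let T be a maximal tail of Λ, let v₀ ∈ T be a vertex with v₀Λ^1T = {e₀} a single edge. Define the 1-graph E with vertices E^0 := T ⨿ {vₙ}_{n≥1} and edges E^1 := (Λ^1T \ {e₀}) ⨿ {eₙ}_{n≥1}, where r_E and s_E agree with r and s on Λ^1T \ {e₀}, r_E(eₙ) = v_{n−1} (with v₀ the given vertex) and s_E(eₙ) = vₙ; let G act on E fixing all new edges and vertices (g·eₙ = eₙ, g·vₙ = vₙ) and acting as before on Λ^1T \ {e₀}, with restriction g|_{eₙ} := g and g|_{vₙ} := g and the original restriction on Λ^1T \ {e₀}. Then g·e₀ = e₀ and g|_{e₀} fixes the data consistently, E is a row-finite source-free 1-graph, and (G,E) is a pseudo free self-similar 1-graph. -/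
/-- The edges of `Λ^1 T` other than `e₀`. -/
def IsOldEdge (Λ : KGraph 1) (T : Set Λ.Path) (e₀ e : Λ.Path) : Prop :=
  Λ.d e = (fun _ => 1) ∧ Λ.s e ∈ T ∧ e ≠ e₀

/-! The extended graph `E` is the path category of an ordinary directed graph, on which `G`
acts by a vertex-fixing self-similar action on edges. Such an action extends to paths by
`g · (μe) = (g · μ)(g|_μ · e)` and `g|_{μe} = (g|_μ)|_e`, and pseudo freeness propagates edge
by edge. Since `G` fixes vertices and `e₀` is the only edge of `v₀ Λ^1 T`, we get `g · e₀ = e₀`,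
so `G` acts on `Λ^1 T \ {e₀}`; on the new edges `eₙ` it acts trivially. Row-finiteness of `E`
comes from that of `Λ`, and source-freeness from `T` being a maximal tail, the edge `e₁`
taking over the role of `e₀` at `v₀`. -/

namespace KGraph

variable (Λ : KGraph 1)

theorem rowFinite_of_finite_edges
    (h : ∀ v, Λ.IsVertex v → {e | Λ.r e = v ∧ Λ.d e = fun _ => 1}.Finite) :
    Λ.RowFinite := by
  suffices ∀ n v, Λ.IsVertex v → {μ | Λ.r μ = v ∧ Λ.d μ = fun _ => n}.Finite by
    intro v hv p
    rw [eq_const_of_unique p]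
    exact this _ v hv
  intro n
  induction n with
  | zero =>
    intro v _
    refine (Set.finite_singleton v).subset ?_
    rintro μ ⟨rfl, hμ⟩
    exact Λ.eq_r_of_d_eq_zero μ hμ
  | succ n ih =>
    intro v hv
    refine ((h v hv).biUnion fun e _ => (ih (Λ.s e) (Λ.d_s e)).image (Λ.comp e)).subset ?_
    rintro μ ⟨rfl, hμ⟩
    obtain ⟨⟨e, ν⟩, ⟨hsr, he, hν, rfl⟩, -⟩ :=
      Λ.factor μ (fun _ => 1) (fun _ => n) (by rw [hμ]; funext; simp only [Pi.add_apply]; omega)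
    exact Set.mem_biUnion ⟨(Λ.r_comp e ν hsr).symm, he⟩ ⟨ν, ⟨hsr.symm, hν⟩, rfl⟩

theorem sourceFree_of_exists_edge
    (h : ∀ v, Λ.IsVertex v → ∃ e, Λ.r e = v ∧ Λ.d e = fun _ => 1) :
    Λ.SourceFree := by
  suffices ∀ n v, Λ.IsVertex v → ∃ μ, Λ.r μ = v ∧ Λ.d μ = fun _ => n by
    intro v hv p
    rw [eq_const_of_unique p]
    exact this _ v hv
  intro n
  induction n with
  | zero => exact fun v hv => ⟨v, Λ.r_r v ▸ (Λ.eq_r_of_d_eq_zero v hv).symm, hv⟩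
  | succ n ih =>
    intro v hv
    obtain ⟨e, rfl, he⟩ := h v hv
    obtain ⟨ν, hν, hνd⟩ := ih (Λ.s e) (Λ.d_s e)
    refine ⟨Λ.comp e ν, Λ.r_comp e ν hν.symm, ?_⟩
    rw [Λ.d_comp e ν hν.symm, he, hνd]
    funext
    simp only [Pi.add_apply]
    omega

end KGraph

theorem MaximalTail.r_mem_of_s_mem {k : ℕ} {Λ : KGraph k} {T : Set Λ.Path} (hT : MaximalTail Λ T)
    {μ : Λ.Path} (hμ : Λ.s μ ∈ T) : Λ.r μ ∈ T :=
  hT.backward_closed _ (Λ.d_r μ) _ hμ ⟨μ, rfl, rfl⟩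

namespace SelfSimilarSys

variable {G : Type} [Group G] [Countable G] {Λ : KGraph 1} (S : SelfSimilarSys 1 G Λ)
  {T : Set Λ.Path} {v₀ e₀ : Λ.Path}

theorem act_eq_of_unique_edge (hfix : ∀ g v, Λ.IsVertex v → S.act g v = v)
    (he₀ : Λ.r e₀ = v₀ ∧ Λ.d e₀ = (fun _ => 1) ∧ Λ.s e₀ ∈ T)
    (huniq : ∀ e, Λ.r e = v₀ → Λ.d e = (fun _ => 1) → Λ.s e ∈ T → e = e₀) (g : G) :
    S.act g e₀ = e₀ := by
  apply huniq
  · rw [S.r_act, hfix g _ (Λ.d_r e₀), he₀.1]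
  · rw [S.d_act, he₀.2.1]
  · rw [S.s_act, hfix g _ (Λ.d_s e₀)]
    exact he₀.2.2

theorem isOldEdge_act (hfix : ∀ g v, Λ.IsVertex v → S.act g v = v)
    (h₀ : ∀ g, S.act g e₀ = e₀) {e : Λ.Path} (he : IsOldEdge Λ T e₀ e) (g : G) :
    IsOldEdge Λ T e₀ (S.act g e) := by
  refine ⟨(S.d_act g e).trans he.1, ?_, fun h => he.2.2 ?_⟩
  · rw [S.s_act, hfix g _ (Λ.d_s e)]
    exact he.2.1
  · rw [← S.act_one e, ← inv_mul_cancel g, S.act_mul, h, h₀]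

end SelfSimilarSys

namespace Quiver.Path

variable {V : Type} [Quiver V] {a b b' c : V}

theorem getElem?_vertices_comp_length (p₁ : Path a b) (p₂ : Path b c) :
    (p₁.comp p₂).vertices[p₁.length]? = some b := by
  rw [List.getElem?_eq_getElem (by simp)]
  simp

theorem obj_eq_of_comp_eq_comp {p₁ : Path a b} {p₂ : Path b c} {q₁ : Path a b'}
    {q₂ : Path b' c} (h : p₁.comp p₂ = q₁.comp q₂) (hl : p₁.length = q₁.length) : b = b' := by
  have hb := getElem?_vertices_comp_length p₁ p₂
  rw [h, hl, getElem?_vertices_comp_length] at hb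
  exact (Option.some.inj hb).symm

end Quiver.Path

structure DirectedGraph where
  Vert : Type
  Edge : Type
  r : Edge → Vert
  s : Edge → Vert

namespace DirectedGraph

variable (D : DirectedGraph)

/-- An arrow `a ⟶ b` is an edge with range `a` and source `b`, so that `p.comp q` is the
concatenation `pq` in the sense of `k`-graphs. -/
instance : Quiver D.Vert := ⟨fun a b => {e : D.Edge // D.r e = a ∧ D.s e = b}⟩

abbrev FinPath : Type := Σ a b : D.Vert, Quiver.Path a b

open scoped Classical in
noncomputable def pathComp (μ ν : D.FinPath) : D.FinPath :=
  if h : μ.2.1 = ν.1 then ⟨μ.1, ν.2.1, μ.2.2.comp (ν.2.2.cast h.symm rfl)⟩ else μ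

variable {D}

def edgeList {a : D.Vert} : ∀ {b : D.Vert}, Quiver.Path a b → List D.Edge
  | _, .nil => []
  | _, .cons p e => e.1 :: edgeList p

theorem length_edgeList {a b : D.Vert} (p : Quiver.Path a b) :
    (edgeList p).length = p.length := by
  induction p with
  | nil => rfl
  | cons p e ih => simp [edgeList, ih]

theorem edgeList_injective {a b : D.Vert} {p q : Quiver.Path a b}
    (h : edgeList p = edgeList q) : p = q := by
  induction p with
  | nil =>
    refine (q.eq_nil_of_length_zero ?_).symm
    rw [← length_edgeList, ← h]
    rfl
  | cons p e ih =>
    cases q with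
    | nil => exact absurd h (List.cons_ne_nil _ _)
    | cons q e' =>
      obtain ⟨he, hpq⟩ := List.cons.inj h
      obtain rfl : _ = _ := e.2.1.symm.trans (he ▸ e'.2.1)
      rw [ih hpq, Subtype.ext he]

instance [Countable D.Edge] (a b : D.Vert) : Countable (Quiver.Path a b) :=
  Function.Injective.countable fun _ _ => edgeList_injective

theorem pathComp_mk {a b c : D.Vert} (p : Quiver.Path a b) (q : Quiver.Path b c) :
    D.pathComp ⟨a, b, p⟩ ⟨b, c, q⟩ = ⟨a, c, p.comp q⟩ := by
  simp [pathComp]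

section KGraph

variable (D) [Countable D.Vert] [Countable D.Edge]

noncomputable def toKGraph : KGraph 1 where
  Path := D.FinPath
  countable := inferInstance
  r μ := ⟨μ.1, μ.1, .nil⟩
  s μ := ⟨μ.2.1, μ.2.1, .nil⟩
  d μ := fun _ => μ.2.2.length
  comp := D.pathComp
  d_r _ := rfl
  d_s _ := rfl
  r_r _ := rfl
  s_r _ := rfl
  r_s _ := rfl
  s_s _ := rfl
  eq_r_of_d_eq_zero := by
    rintro ⟨a, b, p⟩ h
    obtain rfl := p.eq_of_length_zero (congrFun h 0)
    rw [p.eq_nil_of_length_zero (congrFun h 0)]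
  comp_id := by
    rintro ⟨a, b, p⟩
    exact pathComp_mk p .nil
  id_comp := by
    rintro ⟨a, b, p⟩
    rw [pathComp_mk, Quiver.Path.nil_comp]
  r_comp := by
    rintro ⟨a, b, p⟩ ⟨b', c, q⟩ h
    cases h
    rw [pathComp_mk]
  s_comp := by
    rintro ⟨a, b, p⟩ ⟨b', c, q⟩ h
    cases h
    rw [pathComp_mk]
  d_comp := by
    rintro ⟨a, b, p⟩ ⟨b', c, q⟩ h
    cases h
    rw [pathComp_mk]
    funext
    exact p.length_comp q
  comp_assoc := by
    rintro ⟨a, b, p⟩ ⟨b', c, q⟩ ⟨c', d, t⟩ h h'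
    cases h
    cases h'
    rw [pathComp_mk, pathComp_mk, pathComp_mk, pathComp_mk, Quiver.Path.comp_assoc]
  factor := by
    rintro ⟨a, c, p⟩ m n h
    have hlen : p.length = m 0 + n 0 := congrFun h 0
    obtain ⟨b, p₁, p₂, rfl, hp₁⟩ := p.exists_eq_comp_of_le_length (n := m 0) (by omega)
    rw [Quiver.Path.length_comp] at hlen
    refine ⟨(⟨a, b, p₁⟩, ⟨b, c, p₂⟩), ⟨rfl, ?_, ?_, pathComp_mk p₁ p₂⟩, ?_⟩
    · funext i
      rw [Fin.fin_one_eq_zero i]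
      exact hp₁
    · funext i
      rw [Fin.fin_one_eq_zero i]
      show p₂.length = n 0
      omega
    · rintro ⟨⟨a', b', q₁⟩, ⟨b'', c', q₂⟩⟩ ⟨hs, hq₁, -, hc⟩
      cases hs
      rw [pathComp_mk] at hc
      obtain ⟨rfl, hc⟩ := Sigma.mk.inj_iff.mp hc
      obtain ⟨rfl, hc⟩ := Sigma.mk.inj_iff.mp (eq_of_heq hc)
      have hl : q₁.length = p₁.length := (congrFun hq₁ 0).trans hp₁.symm
      obtain rfl := Quiver.Path.obj_eq_of_comp_eq_comp (eq_of_heq hc) hl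
      obtain ⟨rfl, rfl⟩ := (Quiver.Path.comp_inj' hl).mp (eq_of_heq hc)
      rfl

variable {D}

def vertex (a : D.Vert) : D.toKGraph.Path := ⟨a, a, .nil⟩

def edge (e : D.Edge) : D.toKGraph.Path := ⟨D.r e, D.s e, Quiver.Hom.toPath ⟨e, rfl, rfl⟩⟩

theorem edge_eq_mk {e : D.Edge} {a b : D.Vert} (h : D.r e = a ∧ D.s e = b) :
    edge e = ⟨a, b, Quiver.Hom.toPath (⟨e, h⟩ : a ⟶ b)⟩ := by
  obtain ⟨rfl, rfl⟩ := h
  rfl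

theorem isVertex_vertex (a : D.Vert) : D.toKGraph.IsVertex (vertex a) := rfl

theorem vertex_injective : Function.Injective (vertex : D.Vert → D.toKGraph.Path) :=
  fun _ _ h => congrArg Sigma.fst h

theorem isVertex_iff {μ : D.toKGraph.Path} : D.toKGraph.IsVertex μ ↔ ∃ a, μ = vertex a :=
  ⟨fun h => ⟨μ.1, D.toKGraph.eq_r_of_d_eq_zero μ h⟩, fun ⟨a, h⟩ => h ▸ isVertex_vertex a⟩

theorem d_edge (e : D.Edge) : D.toKGraph.d (edge e) = fun _ => 1 := rfl

theorem r_edge (e : D.Edge) : D.toKGraph.r (edge e) = vertex (D.r e) := rfl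

theorem s_edge (e : D.Edge) : D.toKGraph.s (edge e) = vertex (D.s e) := rfl

theorem edge_injective : Function.Injective (edge : D.Edge → D.toKGraph.Path) :=
  fun _ _ h => List.singleton_injective (congrArg (fun μ : D.FinPath => edgeList μ.2.2) h)

theorem exists_eq_edge {μ : D.toKGraph.Path} (h : D.toKGraph.d μ = fun _ => 1) :
    ∃ e, μ = edge e := by
  obtain ⟨a, b, _ | ⟨p, e⟩⟩ := μ
  · exact absurd (congrFun h 0) zero_ne_one
  · have hp : p.length = 0 := Nat.succ.inj (congrFun h 0)
    obtain rfl := p.eq_of_length_zero hp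
    rw [p.eq_nil_of_length_zero hp]
    exact ⟨e.1, (edge_eq_mk e.2).symm⟩

theorem toKGraph_rowFinite (h : ∀ a, {e | D.r e = a}.Finite) : D.toKGraph.RowFinite := by
  refine D.toKGraph.rowFinite_of_finite_edges fun v hv => ?_
  obtain ⟨a, rfl⟩ := isVertex_iff.mp hv
  refine ((h a).image edge).subset ?_
  rintro μ ⟨hr, hd⟩
  obtain ⟨e, rfl⟩ := exists_eq_edge hd
  exact ⟨e, vertex_injective hr, rfl⟩

theorem toKGraph_sourceFree (h : ∀ a, ∃ e, D.r e = a) : D.toKGraph.SourceFree := by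
  refine D.toKGraph.sourceFree_of_exists_edge fun v hv => ?_
  obtain ⟨a, rfl⟩ := isVertex_iff.mp hv
  obtain ⟨e, rfl⟩ := h a
  exact ⟨edge e, rfl, rfl⟩

end KGraph

structure SelfSimilarAction (G : Type) [Group G] (D : DirectedGraph) where
  act : G → D.Edge → D.Edge
  res : G → D.Edge → G
  r_act : ∀ g e, D.r (act g e) = D.r e
  s_act : ∀ g e, D.s (act g e) = D.s e
  act_one : ∀ e, act 1 e = e
  act_mul : ∀ g h e, act (g * h) e = act g (act h e)
  res_one : ∀ e, res 1 e = 1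
  res_mul : ∀ g h e, res (g * h) e = res g (act h e) * res h e

namespace SelfSimilarAction

variable {G : Type} [Group G] (A : SelfSimilarAction G D)

def PseudoFree : Prop := ∀ g e, A.act g e = e → A.res g e = 1 → g = 1

def homAct (g : G) {a b : D.Vert} (e : a ⟶ b) : a ⟶ b :=
  ⟨A.act g e.1, (A.r_act g e.1).trans e.2.1, (A.s_act g e.1).trans e.2.2⟩

def pathRes {a : D.Vert} : G → ∀ {b : D.Vert}, Quiver.Path a b → G
  | g, _, .nil => g
  | g, _, .cons p e => A.res (pathRes g p) e.1

def pathAct {a : D.Vert} : G → ∀ {b : D.Vert}, Quiver.Path a b → Quiver.Path a b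
  | _, _, .nil => .nil
  | g, _, .cons p e => (pathAct g p).cons (A.homAct (A.pathRes g p) e)

variable {a b c : D.Vert}

theorem length_pathAct (g : G) (p : Quiver.Path a b) : (A.pathAct g p).length = p.length := by
  induction p with
  | nil => rfl
  | cons p e ih => exact congrArg Nat.succ ih

theorem pathRes_one (p : Quiver.Path a b) : A.pathRes 1 p = 1 := by
  induction p with
  | nil => rfl
  | cons p e ih => rw [pathRes, ih, A.res_one]

theorem pathAct_one (p : Quiver.Path a b) : A.pathAct 1 p = p := by
  induction p with
  | nil => rfl
  | cons p e ih =>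
    rw [pathAct, ih, pathRes_one]
    exact congrArg _ (Subtype.ext (A.act_one e.1))

theorem pathRes_mul (g h : G) (p : Quiver.Path a b) :
    A.pathRes (g * h) p = A.pathRes g (A.pathAct h p) * A.pathRes h p := by
  induction p with
  | nil => rfl
  | cons p e ih =>
    rw [pathRes, ih, A.res_mul]
    rfl

theorem pathAct_mul (g h : G) (p : Quiver.Path a b) :
    A.pathAct (g * h) p = A.pathAct g (A.pathAct h p) := by
  induction p with
  | nil => rfl
  | cons p e ih => simp only [pathAct, ih, pathRes_mul, homAct, A.act_mul]

theorem pathRes_comp (g : G) (p : Quiver.Path a b) (q : Quiver.Path b c) :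
    A.pathRes g (p.comp q) = A.pathRes (A.pathRes g p) q := by
  induction q with
  | nil => rfl
  | cons q e ih =>
    rw [Quiver.Path.comp_cons, pathRes, ih]
    rfl

theorem pathAct_comp (g : G) (p : Quiver.Path a b) (q : Quiver.Path b c) :
    A.pathAct g (p.comp q) = (A.pathAct g p).comp (A.pathAct (A.pathRes g p) q) := by
  induction q with
  | nil => rfl
  | cons q e ih =>
    rw [Quiver.Path.comp_cons, pathAct, ih, pathRes_comp]
    rfl

theorem PseudoFree.eq_one_of_pathAct_eq {A : SelfSimilarAction G D} (hA : A.PseudoFree)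
    {g : G} {p : Quiver.Path a b} (hact : A.pathAct g p = p) (hres : A.pathRes g p = 1) :
    g = 1 := by
  induction p generalizing g with
  | nil => exact hres
  | cons p e ih =>
    obtain ⟨-, hp, he⟩ := Quiver.Path.cons.inj hact
    have he' : A.act (A.pathRes g p) e.1 = e.1 := congrArg Subtype.val (eq_of_heq he)
    exact ih (eq_of_heq hp) (hA _ _ he' hres)

variable [Countable G] [Countable D.Vert] [Countable D.Edge]

def toSelfSimilarSys : SelfSimilarSys 1 G D.toKGraph where
  act g μ := ⟨μ.1, μ.2.1, A.pathAct g μ.2.2⟩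
  res g μ := A.pathRes g μ.2.2
  act_one μ := by
    rw [A.pathAct_one]
    rfl
  act_mul g h μ := by rw [A.pathAct_mul]
  d_act g μ := funext fun _ => A.length_pathAct g μ.2.2
  s_act _ _ := rfl
  r_act _ _ := rfl
  act_comp := by
    rintro g ⟨a, b, p⟩ ⟨b', c, q⟩ h
    cases h
    change (⟨_, _, A.pathAct g (D.pathComp ⟨a, b, p⟩ ⟨b, c, q⟩).2.2⟩ : D.FinPath) =
      D.pathComp ⟨a, b, A.pathAct g p⟩ ⟨b, c, A.pathAct (A.pathRes g p) q⟩
    rw [pathComp_mk, pathComp_mk, pathAct_comp]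
  res_vertex g μ hμ := by
    obtain ⟨a, rfl⟩ := isVertex_iff.mp hμ
    rfl
  res_comp := by
    rintro g ⟨a, b, p⟩ ⟨b', c, q⟩ h
    cases h
    exact (congrArg (A.pathRes g ·.2.2) (pathComp_mk p q)).trans (A.pathRes_comp g p q)
  res_one μ := A.pathRes_one μ.2.2
  res_mul g h μ := A.pathRes_mul g h μ.2.2

theorem toSelfSimilarSys_act_of_isVertex (g : G) {μ : D.toKGraph.Path}
    (hμ : D.toKGraph.IsVertex μ) : A.toSelfSimilarSys.act g μ = μ := by
  obtain ⟨a, rfl⟩ := isVertex_iff.mp hμ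
  rfl

theorem toSelfSimilarSys_act_edge (g : G) (e : D.Edge) :
    A.toSelfSimilarSys.act g (edge e) = edge (A.act g e) :=
  (edge_eq_mk ⟨A.r_act g e, A.s_act g e⟩).symm

theorem toSelfSimilarSys_res_edge (g : G) (e : D.Edge) :
    A.toSelfSimilarSys.res g (edge e) = A.res g e := rfl

theorem PseudoFree.toSelfSimilarSys {A : SelfSimilarAction G D} (hA : A.PseudoFree) :
    A.toSelfSimilarSys.PseudoFree := by
  rintro g ⟨a, b, p⟩ hact hres
  change (⟨a, b, A.pathAct g p⟩ : D.FinPath) = ⟨a, b, p⟩ at hact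
  simp only [Sigma.mk.injEq, heq_eq_eq, true_and] at hact
  exact hA.eq_one_of_pathAct_eq hact hres

end SelfSimilarAction

end DirectedGraph

namespace Extension

open DirectedGraph

variable {Λ : KGraph 1} {T : Set Λ.Path} (hT : MaximalTail Λ T) (e₀ : Λ.Path) {v₀ : Λ.Path}
  (hv₀ : v₀ ∈ T)

/-- `headVertex n` is `vₙ`: the vertex `inr n` of `extendedGraph` stands for `vₙ₊₁`, and
likewise its edge `inr n` for `eₙ₊₁`. -/
def headVertex : ℕ → T ⊕ ℕ
  | 0 => .inl ⟨v₀, hv₀⟩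
  | n + 1 => .inr n

def extendedGraph : DirectedGraph where
  Vert := T ⊕ ℕ
  Edge := {e // IsOldEdge Λ T e₀ e} ⊕ ℕ
  r
    | .inl e => .inl ⟨Λ.r e.1, hT.r_mem_of_s_mem e.2.2.1⟩
    | .inr n => headVertex hv₀ n
  s
    | .inl e => .inl ⟨Λ.s e.1, e.2.2.1⟩
    | .inr n => .inr n

local notation "𝔼" => extendedGraph hT e₀ hv₀

instance : Countable (𝔼).Vert := by
  have := Λ.countable
  exact inferInstanceAs (Countable (T ⊕ ℕ))

instance : Countable (𝔼).Edge := by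
  have := Λ.countable
  exact inferInstanceAs (Countable ({e // IsOldEdge Λ T e₀ e} ⊕ ℕ))

theorem finite_edges_with_range (hRF : Λ.RowFinite) (x : (𝔼).Vert) :
    {f | (𝔼).r f = x}.Finite := by
  rcases x with ⟨u, hu⟩ | m
  · refine ((((hRF u (hT.vertex u hu) fun _ => 1).preimage Subtype.val_injective.injOn).image
      Sum.inl).union (Set.finite_singleton (Sum.inr 0))).subset ?_
    rintro (⟨e, he⟩ | (_ | n)) hf
    · exact Or.inl ⟨⟨e, he⟩, ⟨congrArg Subtype.val (Sum.inl.inj hf), he.1⟩, rfl⟩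
    · exact Or.inr rfl
    · exact absurd hf Sum.inr_ne_inl
  · refine (Set.finite_singleton (Sum.inr (m + 1))).subset ?_
    rintro (⟨e, he⟩ | (_ | n)) hf
    · exact absurd hf Sum.inl_ne_inr
    · exact absurd hf Sum.inl_ne_inr
    · rw [Sum.inr.inj hf]
      rfl

theorem exists_edge_with_range (he₀ : Λ.r e₀ = v₀) (x : (𝔼).Vert) : ∃ f, (𝔼).r f = x := by
  rcases x with ⟨u, hu⟩ | m
  · obtain ⟨e, rfl, hed, hes⟩ := hT.reaches u hu (fun _ => 1)
    by_cases h : e = e₀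
    · subst h
      exact ⟨.inr 0, by subst he₀; rfl⟩
    · exact ⟨.inl ⟨e, hed, hes, h⟩, rfl⟩
  · exact ⟨.inr (m + 1), rfl⟩

variable {G : Type} [Group G] [Countable G] (S : SelfSimilarSys 1 G Λ)
  (hfix : ∀ g v, Λ.IsVertex v → S.act g v = v) (h₀ : ∀ g, S.act g e₀ = e₀)

def extendedAction : (𝔼).SelfSimilarAction G where
  act g f := match f with
    | .inl e => .inl ⟨S.act g e.1, S.isOldEdge_act hfix h₀ e.2 g⟩
    | .inr n => .inr n
  res g f := match f with
    | .inl e => S.res g e.1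
    | .inr _ => g
  r_act g f := match f with
    | .inl e => by simp only [extendedGraph, S.r_act, hfix g _ (Λ.d_r e.1)]
    | .inr _ => rfl
  s_act g f := match f with
    | .inl e => by simp only [extendedGraph, S.s_act, hfix g _ (Λ.d_s e.1)]
    | .inr _ => rfl
  act_one f := match f with
    | .inl e => congrArg Sum.inl (Subtype.ext (S.act_one e.1))
    | .inr _ => rfl
  act_mul g h f := match f with
    | .inl e => congrArg Sum.inl (Subtype.ext (S.act_mul g h e.1))
    | .inr _ => rfl
  res_one f := match f with
    | .inl e => S.res_one e.1
    | .inr _ => rfl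
  res_mul g h f := match f with
    | .inl e => S.res_mul g h e.1
    | .inr _ => rfl

theorem extendedAction_pseudoFree (hPF : S.PseudoFree) :
    (extendedAction hT e₀ hv₀ S hfix h₀).PseudoFree := by
  rintro g (e | n) hact hres
  · exact hPF g e.1 (congrArg Subtype.val (Sum.inl.inj hact)) hres
  · exact hres

/-- Off `T`, resp. off `Λ^1 T \ {e₀}`, the value is junk. -/
noncomputable def oldVertex (v : Λ.Path) : (𝔼).toKGraph.Path :=
  open scoped Classical in
  if h : v ∈ T then vertex (D := 𝔼) (.inl ⟨v, h⟩) else vertex (headVertex hv₀ 0)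

def newVertex (n : ℕ) : (𝔼).toKGraph.Path := vertex (headVertex hv₀ n)

noncomputable def oldEdge (e : Λ.Path) : (𝔼).toKGraph.Path :=
  open scoped Classical in
  if h : IsOldEdge Λ T e₀ e then edge (D := 𝔼) (.inl ⟨e, h⟩) else edge (D := 𝔼) (.inr 0)

def newEdge (n : ℕ) : (𝔼).toKGraph.Path := edge (D := 𝔼) (.inr (n - 1))

theorem newVertex_zero : newVertex hT e₀ hv₀ 0 = oldVertex hT e₀ hv₀ v₀ := by
  rw [oldVertex, dif_pos hv₀]
  rfl

theorem isVertex_oldVertex (v : Λ.Path) : (𝔼).toKGraph.IsVertex (oldVertex hT e₀ hv₀ v) := by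
  unfold oldVertex
  split <;> exact isVertex_vertex _

theorem isVertex_newVertex (n : ℕ) : (𝔼).toKGraph.IsVertex (newVertex hT e₀ hv₀ n) :=
  isVertex_vertex _

variable {hT e₀ hv₀}

theorem oldVertex_of_mem {v : Λ.Path} (hv : v ∈ T) :
    oldVertex hT e₀ hv₀ v = vertex (D := 𝔼) (.inl ⟨v, hv⟩) := dif_pos hv

theorem newVertex_of_pos {n : ℕ} (hn : 1 ≤ n) :
    newVertex hT e₀ hv₀ n = vertex (D := 𝔼) (.inr (n - 1)) := by
  obtain ⟨n, rfl⟩ := Nat.exists_eq_add_of_le' hn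
  rfl

theorem oldEdge_of_isOldEdge {e : Λ.Path} (he : IsOldEdge Λ T e₀ e) :
    oldEdge hT e₀ hv₀ e = edge (D := 𝔼) (.inl ⟨e, he⟩) := dif_pos he

theorem oldVertex_injOn : Set.InjOn (oldVertex hT e₀ hv₀) T := fun v hv w hw h => by
  rw [oldVertex_of_mem hv, oldVertex_of_mem hw] at h
  exact congrArg Subtype.val (Sum.inl.inj (vertex_injective h))

theorem newVertex_inj {m n : ℕ} (hm : 1 ≤ m) (hn : 1 ≤ n)
    (h : newVertex hT e₀ hv₀ m = newVertex hT e₀ hv₀ n) : m = n := by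
  rw [newVertex_of_pos hm, newVertex_of_pos hn] at h
  have := Sum.inr.inj (vertex_injective h)
  omega

theorem oldVertex_ne_newVertex {v : Λ.Path} (hv : v ∈ T) {n : ℕ} (hn : 1 ≤ n) :
    oldVertex hT e₀ hv₀ v ≠ newVertex hT e₀ hv₀ n := by
  rw [oldVertex_of_mem hv, newVertex_of_pos hn]
  exact fun h => Sum.inl_ne_inr (vertex_injective h)

theorem isVertex_cases {w : (𝔼).toKGraph.Path} (hw : (𝔼).toKGraph.IsVertex w) :
    (∃ v ∈ T, w = oldVertex hT e₀ hv₀ v) ∨ ∃ n, 1 ≤ n ∧ w = newVertex hT e₀ hv₀ n := by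
  obtain ⟨⟨v, hv⟩ | n, rfl⟩ := isVertex_iff.mp hw
  · exact Or.inl ⟨v, hv, (oldVertex_of_mem hv).symm⟩
  · exact Or.inr ⟨n + 1, by omega, rfl⟩

theorem d_oldEdge {e : Λ.Path} (he : IsOldEdge Λ T e₀ e) :
    (𝔼).toKGraph.d (oldEdge hT e₀ hv₀ e) = fun _ => 1 := by
  rw [oldEdge_of_isOldEdge he]
  exact d_edge _

theorem r_oldEdge {e : Λ.Path} (he : IsOldEdge Λ T e₀ e) :
    (𝔼).toKGraph.r (oldEdge hT e₀ hv₀ e) = oldVertex hT e₀ hv₀ (Λ.r e) := by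
  rw [oldEdge_of_isOldEdge he, oldVertex_of_mem (hT.r_mem_of_s_mem he.2.1)]
  exact r_edge _

theorem s_oldEdge {e : Λ.Path} (he : IsOldEdge Λ T e₀ e) :
    (𝔼).toKGraph.s (oldEdge hT e₀ hv₀ e) = oldVertex hT e₀ hv₀ (Λ.s e) := by
  rw [oldEdge_of_isOldEdge he, oldVertex_of_mem he.2.1]
  exact s_edge _

theorem d_newEdge (n : ℕ) : (𝔼).toKGraph.d (newEdge hT e₀ hv₀ n) = fun _ => 1 := d_edge _

theorem r_newEdge (n : ℕ) :
    (𝔼).toKGraph.r (newEdge hT e₀ hv₀ n) = newVertex hT e₀ hv₀ (n - 1) := r_edge _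

theorem s_newEdge {n : ℕ} (hn : 1 ≤ n) :
    (𝔼).toKGraph.s (newEdge hT e₀ hv₀ n) = newVertex hT e₀ hv₀ n := by
  rw [newVertex_of_pos hn]
  exact s_edge _

theorem oldEdge_inj {e e' : Λ.Path} (he : IsOldEdge Λ T e₀ e) (he' : IsOldEdge Λ T e₀ e')
    (h : oldEdge hT e₀ hv₀ e = oldEdge hT e₀ hv₀ e') : e = e' := by
  rw [oldEdge_of_isOldEdge he, oldEdge_of_isOldEdge he'] at h
  exact congrArg Subtype.val (Sum.inl.inj (edge_injective h))

theorem newEdge_inj {m n : ℕ} (hm : 1 ≤ m) (hn : 1 ≤ n)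
    (h : newEdge hT e₀ hv₀ m = newEdge hT e₀ hv₀ n) : m = n := by
  have := Sum.inr.inj (edge_injective h)
  omega

theorem oldEdge_ne_newEdge {e : Λ.Path} (he : IsOldEdge Λ T e₀ e) (n : ℕ) :
    oldEdge hT e₀ hv₀ e ≠ newEdge hT e₀ hv₀ n := by
  rw [oldEdge_of_isOldEdge he]
  exact fun h => Sum.inl_ne_inr (edge_injective h)

theorem edge_cases {f : (𝔼).toKGraph.Path} (hf : (𝔼).toKGraph.d f = fun _ => 1) :
    (∃ e, IsOldEdge Λ T e₀ e ∧ f = oldEdge hT e₀ hv₀ e) ∨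
      ∃ n, 1 ≤ n ∧ f = newEdge hT e₀ hv₀ n := by
  obtain ⟨⟨e, he⟩ | n, rfl⟩ := exists_eq_edge hf
  · exact Or.inl ⟨e, he, (oldEdge_of_isOldEdge he).symm⟩
  · exact Or.inr ⟨n + 1, by omega, rfl⟩

variable {S hfix h₀}

theorem act_oldEdge {e : Λ.Path} (he : IsOldEdge Λ T e₀ e) (g : G) :
    (extendedAction hT e₀ hv₀ S hfix h₀).toSelfSimilarSys.act g (oldEdge hT e₀ hv₀ e) =
      oldEdge hT e₀ hv₀ (S.act g e) := by
  rw [oldEdge_of_isOldEdge he, oldEdge_of_isOldEdge (S.isOldEdge_act hfix h₀ he g)]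
  exact SelfSimilarAction.toSelfSimilarSys_act_edge _ g _

theorem res_oldEdge {e : Λ.Path} (he : IsOldEdge Λ T e₀ e) (g : G) :
    (extendedAction hT e₀ hv₀ S hfix h₀).toSelfSimilarSys.res g (oldEdge hT e₀ hv₀ e) =
      S.res g e := by
  rw [oldEdge_of_isOldEdge he]
  exact SelfSimilarAction.toSelfSimilarSys_res_edge _ g _

theorem act_newEdge (g : G) (n : ℕ) :
    (extendedAction hT e₀ hv₀ S hfix h₀).toSelfSimilarSys.act g (newEdge hT e₀ hv₀ n) =
      newEdge hT e₀ hv₀ n :=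
  SelfSimilarAction.toSelfSimilarSys_act_edge _ g _

theorem res_newEdge (g : G) (n : ℕ) :
    (extendedAction hT e₀ hv₀ S hfix h₀).toSelfSimilarSys.res g (newEdge hT e₀ hv₀ n) = g :=
  SelfSimilarAction.toSelfSimilarSys_res_edge _ g _

end Extension

theorem extended_graph_selfSimilar_general
    (G : Type) [Group G] [Countable G] (Λ : KGraph 1)
    (hRF : Λ.RowFinite)
    (S : SelfSimilarSys 1 G Λ) (hPF : S.PseudoFree)
    (hfix : ∀ g v, Λ.IsVertex v → S.act g v = v)
    (T : Set Λ.Path) (hT : MaximalTail Λ T)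
    (v₀ e₀ : Λ.Path) (hv₀ : v₀ ∈ T)
    (he₀ : Λ.r e₀ = v₀ ∧ Λ.d e₀ = (fun _ => 1) ∧ Λ.s e₀ ∈ T)
    (huniq : ∀ e, Λ.r e = v₀ → Λ.d e = (fun _ => 1) → Λ.s e ∈ T → e = e₀) :
    -- g · e₀ = e₀ for every g ∈ G
    (∀ g : G, S.act g e₀ = e₀) ∧
    ∃ (E : KGraph 1) (S' : SelfSimilarSys 1 G E)
      (vmap : Λ.Path → E.Path) (vnew : ℕ → E.Path)
      (emap : Λ.Path → E.Path) (enew : ℕ → E.Path),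
      -- the vertices of E: E^0 = T ⨿ {vₙ}_{n ≥ 1}
      (∀ v ∈ T, E.IsVertex (vmap v)) ∧
      (∀ n, E.IsVertex (vnew n)) ∧
      vnew 0 = vmap v₀ ∧
      (∀ v ∈ T, ∀ w ∈ T, vmap v = vmap w → v = w) ∧
      (∀ m n, 1 ≤ m → 1 ≤ n → vnew m = vnew n → m = n) ∧
      (∀ v ∈ T, ∀ n, 1 ≤ n → vmap v ≠ vnew n) ∧
      (∀ w, E.IsVertex w → (∃ v ∈ T, w = vmap v) ∨ (∃ n, 1 ≤ n ∧ w = vnew n)) ∧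
      -- the edges of E: E^1 = (Λ^1 T \ {e₀}) ⨿ {eₙ}_{n ≥ 1}
      (∀ e, IsOldEdge Λ T e₀ e →
        E.d (emap e) = (fun _ => 1) ∧ E.r (emap e) = vmap (Λ.r e) ∧
          E.s (emap e) = vmap (Λ.s e)) ∧
      (∀ n, 1 ≤ n → E.d (enew n) = (fun _ => 1) ∧
        E.r (enew n) = vnew (n - 1) ∧ E.s (enew n) = vnew n) ∧
      (∀ e e', IsOldEdge Λ T e₀ e → IsOldEdge Λ T e₀ e' → emap e = emap e' → e = e') ∧
      (∀ m n, 1 ≤ m → 1 ≤ n → enew m = enew n → m = n) ∧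
      (∀ e, IsOldEdge Λ T e₀ e → ∀ n, 1 ≤ n → emap e ≠ enew n) ∧
      (∀ f, E.d f = (fun _ => 1) →
        (∃ e, IsOldEdge Λ T e₀ e ∧ f = emap e) ∨ (∃ n, 1 ≤ n ∧ f = enew n)) ∧
      -- E is a row-finite source-free 1-graph
      E.RowFinite ∧ E.SourceFree ∧
      -- the action of G on E
      (∀ (g : G) (e : Λ.Path), IsOldEdge Λ T e₀ e →
        S'.act g (emap e) = emap (S.act g e) ∧ S'.res g (emap e) = S.res g e) ∧
      (∀ (g : G) (n : ℕ), 1 ≤ n →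
        S'.act g (enew n) = enew n ∧ S'.res g (enew n) = g) ∧
      (∀ (g : G) (w : E.Path), E.IsVertex w → S'.act g w = w) ∧
      -- (G, E) is pseudo free
      S'.PseudoFree := by
  have h₀ := S.act_eq_of_unique_edge hfix he₀ huniq
  open Extension DirectedGraph.SelfSimilarAction in
  exact ⟨h₀, _, (extendedAction hT e₀ hv₀ S hfix h₀).toSelfSimilarSys,
    oldVertex hT e₀ hv₀, newVertex hT e₀ hv₀, oldEdge hT e₀ hv₀, newEdge hT e₀ hv₀,
    fun v _ => isVertex_oldVertex hT e₀ hv₀ v,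
    isVertex_newVertex hT e₀ hv₀,
    newVertex_zero hT e₀ hv₀,
    fun _ hv _ hw => oldVertex_injOn hv hw,
    fun _ _ => newVertex_inj,
    fun _ hv _ => oldVertex_ne_newVertex hv,
    fun _ => isVertex_cases,
    fun _ he => ⟨d_oldEdge he, r_oldEdge he, s_oldEdge he⟩,
    fun n hn => ⟨d_newEdge n, r_newEdge n, s_newEdge hn⟩,
    fun _ _ => oldEdge_inj,
    fun _ _ => newEdge_inj,
    fun _ he n _ => oldEdge_ne_newEdge he n,
    fun _ => edge_cases,
    DirectedGraph.toKGraph_rowFinite (finite_edges_with_range hT e₀ hv₀ hRF),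
    DirectedGraph.toKGraph_sourceFree (exists_edge_with_range hT e₀ hv₀ he₀.1),
    fun g _ he => ⟨act_oldEdge he g, res_oldEdge he g⟩,
    fun g n _ => ⟨act_newEdge g n, res_newEdge g n⟩,
    fun g _ => toSelfSimilarSys_act_of_isVertex _ g,
    (extendedAction_pseudoFree hT e₀ hv₀ S hfix h₀ hPF).toSelfSimilarSys⟩

/-- For a pseudo free self-similar `1`-graph `(G, Λ)` with `g · v = v` for
vertices, a maximal tail `T` and a vertex `v₀ ∈ T` with `v₀ Λ^1 T = {e₀}`:
`g · e₀ = e₀` for all `g`, and the graph `E` obtained from `ΛT` by deleting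
`e₀` and attaching an infinite head `v₀ ← v₁ ← v₂ ← ⋯` (via new edges `eₙ`
with `r(eₙ) = v_{n−1}`, `s(eₙ) = vₙ`), with `G` acting as before on the old
edges and trivially on the new ones (`g · eₙ = eₙ`, `g|_{eₙ} = g`,
`g · vₙ = vₙ`, `g|_{vₙ} = g`), is a row-finite source-free `1`-graph such
that `(G, E)` is a pseudo free self-similar `1`-graph. -/
theorem extended_graph_selfSimilar
    (G : Type) [Group G] [Countable G] (Λ : KGraph 1)
    (hRF : Λ.RowFinite) (hSF : Λ.SourceFree)
    (S : SelfSimilarSys 1 G Λ) (hPF : S.PseudoFree)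
    (hfix : ∀ g v, Λ.IsVertex v → S.act g v = v)
    (T : Set Λ.Path) (hT : MaximalTail Λ T)
    (v₀ e₀ : Λ.Path) (hv₀ : v₀ ∈ T)
    (he₀ : Λ.r e₀ = v₀ ∧ Λ.d e₀ = (fun _ => 1) ∧ Λ.s e₀ ∈ T)
    (huniq : ∀ e, Λ.r e = v₀ → Λ.d e = (fun _ => 1) → Λ.s e ∈ T → e = e₀) :
    -- g · e₀ = e₀ for every g ∈ G
    (∀ g : G, S.act g e₀ = e₀) ∧
    ∃ (E : KGraph 1) (S' : SelfSimilarSys 1 G E)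
      (vmap : Λ.Path → E.Path) (vnew : ℕ → E.Path)
      (emap : Λ.Path → E.Path) (enew : ℕ → E.Path),
      -- the vertices of E: E^0 = T ⨿ {vₙ}_{n ≥ 1}
      (∀ v ∈ T, E.IsVertex (vmap v)) ∧
      (∀ n, E.IsVertex (vnew n)) ∧
      vnew 0 = vmap v₀ ∧
      (∀ v ∈ T, ∀ w ∈ T, vmap v = vmap w → v = w) ∧
      (∀ m n, 1 ≤ m → 1 ≤ n → vnew m = vnew n → m = n) ∧
      (∀ v ∈ T, ∀ n, 1 ≤ n → vmap v ≠ vnew n) ∧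
      (∀ w, E.IsVertex w → (∃ v ∈ T, w = vmap v) ∨ (∃ n, 1 ≤ n ∧ w = vnew n)) ∧
      -- the edges of E: E^1 = (Λ^1 T \ {e₀}) ⨿ {eₙ}_{n ≥ 1}
      (∀ e, IsOldEdge Λ T e₀ e →
        E.d (emap e) = (fun _ => 1) ∧ E.r (emap e) = vmap (Λ.r e) ∧
          E.s (emap e) = vmap (Λ.s e)) ∧
      (∀ n, 1 ≤ n → E.d (enew n) = (fun _ => 1) ∧
        E.r (enew n) = vnew (n - 1) ∧ E.s (enew n) = vnew n) ∧
      (∀ e e', IsOldEdge Λ T e₀ e → IsOldEdge Λ T e₀ e' → emap e = emap e' → e = e') ∧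
      (∀ m n, 1 ≤ m → 1 ≤ n → enew m = enew n → m = n) ∧
      (∀ e, IsOldEdge Λ T e₀ e → ∀ n, 1 ≤ n → emap e ≠ enew n) ∧
      (∀ f, E.d f = (fun _ => 1) →
        (∃ e, IsOldEdge Λ T e₀ e ∧ f = emap e) ∨ (∃ n, 1 ≤ n ∧ f = enew n)) ∧
      -- E is a row-finite source-free 1-graph
      E.RowFinite ∧ E.SourceFree ∧
      -- the action of G on E
      (∀ (g : G) (e : Λ.Path), IsOldEdge Λ T e₀ e →
        S'.act g (emap e) = emap (S.act g e) ∧ S'.res g (emap e) = S.res g e) ∧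
      (∀ (g : G) (n : ℕ), 1 ≤ n →
        S'.act g (enew n) = enew n ∧ S'.res g (enew n) = g) ∧
      (∀ (g : G) (w : E.Path), E.IsVertex w → S'.act g w = w) ∧
      -- (G, E) is pseudo free
      S'.PseudoFree :=
  extended_graph_selfSimilar_general G Λ hRF S hPF hfix T hT v₀ e₀ hv₀ he₀ huniq
end
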